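/- arXiv:1109.3636 — 8 statements merged into one kernel-verified Lean document; each statement's English description precedes it below -/
import Mathlib

section
/- Let d ≥ 1 and let x = (x_i^k) for 1 ≤ k ≤ d, 1 ≤ i ≤ d−k+1 be real numbers. Let M(x) be the (d+1)×(d+1) real matrix with M(x)_{i,i} = 1 for all i, M(x)_{i,i+k} = x_i^k for 1 ≤ k ≤ d and 1 ≤ i ≤ d−k+1, and all other entries 0. Then for every n ∈ ℕ, every 1 ≤ k ≤ d and 1 ≤ i ≤ d−k+1, the (i, i+k) entry of M(x)^n equals Σ_{ℓ=1}^k C(n,ℓ)·P_ℓ(x;i,k), where P_ℓ(x;i,k) = Σ x_i^{s₁} x_{i+s₁}^{s₂} x_{i+s₁+s₂}^{s₃} ⋯ x_{i+s₁+⋯+s_{ℓ−1}}^{s_ℓ}, the sum being over all (s₁,…,s_ℓ) ∈ {1,…,k}^ℓ with s₁+⋯+s_ℓ = k. -/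
/-- The upper-triangular unipotent matrix `M(x)` with `M(x)_{i,i} = 1`,
`M(x)_{i,i+k} = x_i^k` (here `x k i` denotes `x_i^k`), and all other entries `0`.
Rows/columns of the `(d+1)×(d+1)` matrix are 0-indexed, while the data `x` is 1-indexed. -/
def Mmat (d : ℕ) (x : ℕ → ℕ → ℝ) : Matrix (Fin (d + 1)) (Fin (d + 1)) ℝ :=
  fun i j =>
    if (i : ℕ) = (j : ℕ) then 1
    else if (i : ℕ) < (j : ℕ) then x ((j : ℕ) - (i : ℕ)) ((i : ℕ) + 1) else 0

/-- `P_ℓ(x; i, k) = Σ x_i^{s₁} x_{i+s₁}^{s₂} ⋯ x_{i+s₁+⋯+s_{ℓ−1}}^{s_ℓ}`, the sum over all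
`(s₁,…,s_ℓ) ∈ {1,…,k}^ℓ` with `s₁+⋯+s_ℓ = k`.  A tuple is encoded by `s : Fin ℓ → Fin k`,
the `t`-th entry being `(s t : ℕ) + 1 ∈ {1,…,k}`, and `x k i` denotes `x_i^k`. -/
def Pcoef (x : ℕ → ℕ → ℝ) (i k ℓ : ℕ) : ℝ :=
  ∑ s ∈ (Finset.univ : Finset (Fin ℓ → Fin k)).filter
      (fun s => (∑ t, ((s t : ℕ) + 1)) = k),
    ∏ t, x ((s t : ℕ) + 1)
      (i + ∑ t' ∈ Finset.univ.filter (fun t' => t' < t), ((s t' : ℕ) + 1))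

/-! Write `M(x) = 1 + N` with `N` strictly upper triangular, `N_{a,a+m} = x_{a+1}^m`. Since `1`
commutes with `N`, the binomial theorem gives `M(x)^n = ∑_ℓ C(n,ℓ) N^ℓ`. Splitting off the first
step of a tuple gives the recursion `P_{ℓ+1}(x;i,k) = ∑_{m=1}^k x_i^m P_ℓ(x;i+m,k-m)`, which is
exactly the recursion of the entries of `N^{ℓ+1} = N N^ℓ`; hence `(N^ℓ)_{a,b} = P_ℓ(x;a+1,b-a)`.
Finally `P_0(x;i,k) = 0` for `k ≥ 1` and `P_ℓ(x;i,k) = 0` for `ℓ > k`. -/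

open Finset

lemma pow_eq_sum_choose_nsmul_sub_one_pow {R : Type*} [Ring R] (a : R) (n : ℕ) :
    a ^ n = ∑ m ∈ range (n + 1), n.choose m • (a - 1) ^ m := by
  conv_lhs => rw [← sub_add_cancel a 1, (Commute.one_right (a - 1)).add_pow]
  refine sum_congr rfl fun m _ => ?_
  rw [one_pow, mul_one, ← nsmul_eq_mul']

lemma sum_fin_succ_eq_sum_Icc {M : Type*} [AddCommMonoid M] (f : ℕ → M) (k : ℕ) :
    ∑ v : Fin k, f (v + 1) = ∑ m ∈ Icc 1 k, f m := by
  rw [Fin.sum_univ_eq_sum_range (fun v => f (v + 1)), range_eq_Ico, sum_Ico_add']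
  rfl

lemma sum_Ioc_eq_sum_Icc_sub {M : Type*} [AddCommMonoid M] (f : ℕ → M) {a b : ℕ} (hab : a ≤ b) :
    ∑ c ∈ Ioc a b, f c = ∑ m ∈ Icc 1 (b - a), f (a + m) := by
  have hIoc : Ioc a b = (Icc 1 (b - a)).map (addLeftEmbedding a) := by
    rw [map_add_left_Icc, Nat.add_sub_cancel' hab, Icc_add_one_left_eq_Ioc]
  rw [hIoc, sum_map]
  rfl

def chainWeight (x : ℕ → ℕ → ℝ) (i : ℕ) {ℓ : ℕ} (s : Fin ℓ → ℕ) : ℝ :=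
  ∏ t, x (s t) (i + ∑ t' ∈ univ.filter (· < t), s t')

lemma chainWeight_cons (x : ℕ → ℕ → ℝ) (i m : ℕ) {ℓ : ℕ} (s : Fin ℓ → ℕ) :
    chainWeight x i (Fin.cons m s : Fin (ℓ + 1) → ℕ) = x m i * chainWeight x (i + m) s := by
  simp only [chainWeight, Fin.prod_univ_succ, Fin.cons_zero, Fin.cons_succ, sum_filter,
    Fin.sum_univ_succ, Fin.succ_lt_succ_iff, Fin.not_lt_zero, Fin.succ_pos, if_true, if_false,
    sum_const_zero, add_zero, add_assoc]

/-- Tuples may be taken in any `Fin K` with `K ≥ k`, so that the tails of tuples for `k` can be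
compared with the tuples for `k - m`. -/
lemma Pcoef_eq_sum_of_le (x : ℕ → ℕ → ℝ) (i ℓ : ℕ) {k K : ℕ} (h : k ≤ K) :
    Pcoef x i k ℓ = ∑ s ∈ (univ : Finset (Fin ℓ → Fin K)).filter
      (fun s => (∑ t, ((s t : ℕ) + 1)) = k), chainWeight x i (fun t => (s t : ℕ) + 1) := by
  have lt_of_sum_eq {s : Fin ℓ → Fin K} (hs : ∑ t, ((s t : ℕ) + 1) = k) (t : Fin ℓ) :
      (s t : ℕ) < k := by
    have := single_le_sum (f := fun t => (s t : ℕ) + 1) (fun _ _ => Nat.zero_le _) (mem_univ t)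
    omega
  refine sum_bij' (fun s _ t => Fin.castLE h (s t))
    (fun s hs t => ⟨s t, lt_of_sum_eq (mem_filter.mp hs).2 t⟩) ?_ ?_ ?_ ?_ ?_ <;>
    intro s hs <;> simp only [mem_filter, mem_univ, true_and] at hs ⊢
  all_goals first | rfl | simpa using hs

lemma Pcoef_succ (x : ℕ → ℕ → ℝ) (i k ℓ : ℕ) :
    Pcoef x i k (ℓ + 1) = ∑ m ∈ Icc 1 k, x m i * Pcoef x (i + m) (k - m) ℓ := by
  rw [← sum_fin_succ_eq_sum_Icc (fun m => x m i * Pcoef x (i + m) (k - m) ℓ),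
    Pcoef_eq_sum_of_le x i (ℓ + 1) le_rfl, sum_filter,
    ← (Fin.consEquiv fun _ => Fin k).sum_comp, Fintype.sum_prod_type]
  refine sum_congr rfl fun v _ => ?_
  rw [Pcoef_eq_sum_of_le x _ ℓ (Nat.sub_le k (v + 1)), sum_filter, mul_sum]
  refine sum_congr rfl fun s _ => ?_
  have hsum : ((v : ℕ) + 1 + ∑ t, ((s t : ℕ) + 1) = k) ↔ ∑ t, ((s t : ℕ) + 1) = k - (v + 1) := by
    omega
  have hcons : (fun t => ((Fin.cons v s : Fin (ℓ + 1) → Fin k) t : ℕ) + 1) =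
      (Fin.cons ((v : ℕ) + 1) (fun t => (s t : ℕ) + 1) : Fin (ℓ + 1) → ℕ) := by
    ext t
    cases t using Fin.cases <;> rfl
  simp only [Fin.consEquiv_apply, Fin.sum_univ_succ, Fin.cons_zero, Fin.cons_succ, hsum, hcons,
    chainWeight_cons, mul_ite, mul_zero]

lemma Pcoef_zero (x : ℕ → ℕ → ℝ) (i k : ℕ) : Pcoef x i k 0 = if k = 0 then 1 else 0 := by
  rcases eq_or_ne k 0 with rfl | hk
  · simp [Pcoef]
  · simp [Pcoef, hk, Ne.symm hk]

lemma Pcoef_eq_zero_of_lt (x : ℕ → ℕ → ℝ) (i : ℕ) {k ℓ : ℕ} (h : k < ℓ) : Pcoef x i k ℓ = 0 := by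
  refine sum_eq_zero fun s hs => absurd (mem_filter.mp hs).2 ?_
  have := card_nsmul_le_sum univ (fun t => (s t : ℕ) + 1) 1 fun _ _ => Nat.le_add_left 1 _
  simp only [card_univ, Fintype.card_fin, smul_eq_mul, mul_one] at this
  omega

section

variable {d : ℕ} (x : ℕ → ℕ → ℝ)

lemma Mmat_sub_one_apply (a b : Fin (d + 1)) :
    (Mmat d x - 1) a b = if (a : ℕ) < b then x (b - a) (a + 1) else 0 := by
  rw [Matrix.sub_apply, Matrix.one_apply, Mmat]
  by_cases hab : a = b
  · simp [hab]
  · simp [hab, Fin.val_ne_of_ne hab]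

lemma Mmat_sub_one_pow_apply (ℓ : ℕ) (a b : Fin (d + 1)) :
    ((Mmat d x - 1) ^ ℓ) a b = if (a : ℕ) ≤ b then Pcoef x (a + 1) (b - a) ℓ else 0 := by
  induction ℓ generalizing a b with
  | zero =>
    rw [pow_zero, Matrix.one_apply, Pcoef_zero]
    by_cases hab : a = b
    · simp [hab]
    · have := Fin.val_ne_of_ne hab
      split_ifs <;> first | rfl | omega
  | succ ℓ ih =>
    have hsum : ((Mmat d x - 1) ^ (ℓ + 1)) a b =
        ∑ c ∈ Ioc (a : ℕ) b, x (c - a) (a + 1) * Pcoef x (c + 1) (b - c) ℓ := by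
      have hsub : Ioc (a : ℕ) b ⊆ range (d + 1) := fun c hc =>
        mem_range.mpr ((mem_Ioc.mp hc).2.trans_lt b.isLt)
      rw [pow_succ', Matrix.mul_apply, ← inter_eq_right.mpr hsub, ← sum_ite_mem,
        ← Fin.sum_univ_eq_sum_range]
      refine sum_congr rfl fun c _ => ?_
      rw [Mmat_sub_one_apply, ih]
      simp only [mem_Ioc]
      split_ifs <;> first | omega | simp
    rw [hsum]
    split_ifs with hab
    · rw [sum_Ioc_eq_sum_Icc_sub _ hab, Pcoef_succ]
      refine sum_congr rfl fun m _ => ?_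
      rw [Nat.add_sub_cancel_left, Nat.sub_sub, add_right_comm]
    · rw [Ioc_eq_empty (by omega), sum_empty]

end

lemma sum_range_choose_mul_Pcoef (x : ℕ → ℕ → ℝ) (n i : ℕ) {k : ℕ} (hk : k ≠ 0) :
    ∑ m ∈ range (n + 1), (n.choose m : ℝ) * Pcoef x i k m =
      ∑ m ∈ Icc 1 k, (n.choose m : ℝ) * Pcoef x i k m := by
  have hPcoef : ∀ m ∉ Icc 1 k, Pcoef x i k m = 0 := fun m hm => by
    rcases Nat.eq_zero_or_pos m with rfl | hm0
    · rw [Pcoef_zero, if_neg hk]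
    · exact Pcoef_eq_zero_of_lt x i (by simp only [mem_Icc, not_and_or] at hm; omega)
  calc ∑ m ∈ range (n + 1), (n.choose m : ℝ) * Pcoef x i k m
      = ∑ m ∈ range (n + 1) ∩ Icc 1 k, (n.choose m : ℝ) * Pcoef x i k m :=
        (sum_subset inter_subset_left fun m hm hm' => by
          rw [hPcoef m fun h => hm' (mem_inter.mpr ⟨hm, h⟩), mul_zero]).symm
    _ = ∑ m ∈ Icc 1 k, (n.choose m : ℝ) * Pcoef x i k m :=
        sum_subset inter_subset_right fun m _ hm => by
          rw [Nat.choose_eq_zero_of_lt (by simp_all), Nat.cast_zero, zero_mul]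

theorem stmt_4 (d : ℕ) (x : ℕ → ℕ → ℝ) (n : ℕ)
    (k : ℕ) (hk1 : 1 ≤ k) (hkd : k ≤ d) (i : ℕ) (hi1 : 1 ≤ i) (hid : i ≤ d - k + 1) :
    (Mmat d x ^ n) ⟨i - 1, by omega⟩ ⟨i - 1 + k, by omega⟩ =
      ∑ ℓ ∈ Finset.Icc 1 k, (n.choose ℓ : ℝ) * Pcoef x i k ℓ := by
  have hi : i - 1 + 1 = i := Nat.sub_add_cancel hi1
  rw [pow_eq_sum_choose_nsmul_sub_one_pow, Matrix.sum_apply,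
    ← sum_range_choose_mul_Pcoef x n i (by omega)]
  simp only [Matrix.smul_apply, Mmat_sub_one_pow_apply, nsmul_eq_mul, Nat.le_add_right, if_true,
    Nat.add_sub_cancel_left, hi]
end

section
/- Let d ≥ 1, α ∈ ℝ, and let θ = (θ₁,…,θ_d) ∈ 𝕋^d. Then for every n ∈ ℤ and every 1 ≤ j ≤ d, the j-th coordinate of T_{α,d}^n(θ) equals Σ_{i=0}^{j} C(n, j−i)·θ_i, where θ₀ denotes the class of α in 𝕋 and C(n,m)·θ denotes the action of the integer C(n,m) on 𝕋. -/
/-!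
Extend a point `θ ∈ 𝕋^d` to the sequence `φ = (α, θ₁, …, θ_d, 0, 0, …)`. In these terms the map
reads `(Tθ)_j = θ_j + φ_{j-1}`, which is the Pascal recursion `C(n+1, m+1) = C(n, m+1) + C(n, m)`
for the binomial convolutions `Σ_{i ≤ m} C(n, m-i) φ_i`. These convolutions at `n = 0` return `θ`,
so they form a two-sided orbit of `T`, and since `T` is injective it is the only one through `θ`.
-/

/-- The skew-product map `T_{α,d} : 𝕋^d → 𝕋^d`,
`T_{α,d}(θ₁,…,θ_d) = (θ₁+α, θ₂+θ₁, θ₃+θ₂, …, θ_d+θ_{d−1})` (coordinates 0-indexed). -/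
noncomputable def Tmap (d : ℕ) (α : ℝ) (θ : Fin d → UnitAddCircle) : Fin d → UnitAddCircle :=
  fun j =>
    if (j : ℕ) = 0 then θ j + (α : UnitAddCircle)
    else θ j + θ ⟨(j : ℕ) - 1, Nat.lt_of_le_of_lt (Nat.sub_le _ _) j.isLt⟩

open Finset

theorem Function.Injective.eq_of_map_succ {X : Type*} {f : X → X} (hf : Function.Injective f)
    {u v : ℤ → X} (hu : ∀ m, u (m + 1) = f (u m)) (hv : ∀ m, v (m + 1) = f (v m))
    (h₀ : u 0 = v 0) : u = v := by
  funext n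
  induction n using Int.induction_on with
  | zero => exact h₀
  | succ k ih => rw [hu, hv, ih]
  | pred k ih => exact hf (by rw [← hu, ← hv, sub_add_cancel, ih])

section BinomConv

variable {M : Type*} [AddCommGroup M] (φ : ℕ → M)

def binomConv (n : ℤ) (m : ℕ) : M :=
  ∑ i ∈ range (m + 1), Ring.choose n (m - i) • φ i

theorem binomConv_zero_left (m : ℕ) : binomConv φ 0 m = φ m := by
  rw [binomConv, sum_range_succ, Nat.sub_self, Ring.choose_zero_right, one_smul,
    add_eq_right]
  refine sum_eq_zero fun i hi => ?_
  rw [Ring.choose_zero_pos ℤ (by simp at hi; omega), zero_smul]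

theorem binomConv_zero_right (n : ℤ) : binomConv φ n 0 = φ 0 := by
  simp [binomConv]

theorem binomConv_succ_succ (n : ℤ) (m : ℕ) :
    binomConv φ (n + 1) (m + 1) = binomConv φ n (m + 1) + binomConv φ n m := by
  have pascal : ∀ i ∈ range (m + 1), Ring.choose (n + 1) (m + 1 - i) • φ i =
      Ring.choose n (m + 1 - i) • φ i + Ring.choose n (m - i) • φ i := by
    intro i hi
    rw [Nat.sub_add_comm (by simp at hi; omega), Ring.choose_succ_succ, add_smul, add_comm]
  rw [binomConv, sum_range_succ, sum_congr rfl pascal, sum_add_distrib, binomConv, binomConv,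
    sum_range_succ _ (m + 1), Nat.sub_self, Ring.choose_zero_right, Ring.choose_zero_right]
  abel

end BinomConv

section Orbit

variable {d : ℕ} (α : ℝ) (θ : Fin d → UnitAddCircle)

def extendCoord : ℕ → UnitAddCircle
  | 0 => α
  | i + 1 => if h : i < d then θ ⟨i, h⟩ else 0

theorem Tmap_apply (j : Fin d) :
    Tmap d α θ j = θ j + extendCoord α θ j := by
  obtain ⟨_ | k, hk⟩ := j
  · rfl
  · simp [Tmap, extendCoord, Nat.lt_of_succ_lt hk]

theorem Tmap_injective : Function.Injective (Tmap d α) := by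
  intro a b hab
  suffices ∀ m (h : m < d), a ⟨m, h⟩ = b ⟨m, h⟩ from funext fun j => this j j.isLt
  intro m
  induction m with
  | zero => intro h; simpa [Tmap_apply, extendCoord] using congrFun hab ⟨0, h⟩
  | succ k ih =>
    intro h
    have := congrFun hab ⟨k + 1, h⟩
    simp only [Tmap_apply, extendCoord, dif_pos (Nat.lt_of_succ_lt h), ih] at this
    exact add_right_cancel this

def tmapOrbit (n : ℤ) : Fin d → UnitAddCircle :=
  fun j => binomConv (extendCoord α θ) n (j + 1)

theorem tmapOrbit_zero : tmapOrbit α θ 0 = θ := by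
  funext j
  simp [tmapOrbit, binomConv_zero_left, extendCoord]

theorem extendCoord_tmapOrbit (n : ℤ) {j : ℕ} (hj : j < d) :
    extendCoord α (tmapOrbit α θ n) j = binomConv (extendCoord α θ) n j := by
  cases j with
  | zero => rw [binomConv_zero_right]; rfl
  | succ k => rw [extendCoord, dif_pos (by omega)]; rfl

theorem tmapOrbit_succ (n : ℤ) :
    tmapOrbit α θ (n + 1) = Tmap d α (tmapOrbit α θ n) := by
  funext j
  rw [Tmap_apply, extendCoord_tmapOrbit _ _ _ j.isLt]
  exact binomConv_succ_succ _ n j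

theorem binomConv_extendCoord_succ (n : ℤ) (j : Fin d) :
    binomConv (extendCoord α θ) n (j + 1) = Ring.choose n ((j : ℕ) + 1) • (α : UnitAddCircle) +
      ∑ i ∈ univ.filter (fun i : Fin d => i ≤ j), Ring.choose n ((j : ℕ) - (i : ℕ)) • θ i := by
  rw [binomConv, sum_range_succ', add_comm, filter_ge_eq_Iic]
  congr 1
  rw [Nat.range_succ_eq_Iic, ← Fin.map_valEmbedding_Iic, sum_map]
  refine sum_congr rfl fun i _ => ?_
  simp [extendCoord]

end Orbit

/-- Coordinates are 0-indexed (paper index `j+1`), and the ℤ-iteration of the invertible map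
`T_{α,d}` is encoded by a two-sided orbit `S` with `S (m+1) = T_{α,d} (S m)`. -/
theorem stmt_7_general (d : ℕ) (α : ℝ)
    (S : ℤ → Fin d → UnitAddCircle)
    (hS : ∀ m : ℤ, S (m + 1) = Tmap d α (S m)) :
    ∀ (n : ℤ) (j : Fin d),
      S n j = Ring.choose n ((j : ℕ) + 1) • (α : UnitAddCircle) +
        ∑ i ∈ Finset.univ.filter (fun i : Fin d => i ≤ j),
          Ring.choose n ((j : ℕ) - (i : ℕ)) • S 0 i := by
  have hOrbit : S = tmapOrbit α (S 0) :=
    (Tmap_injective α).eq_of_map_succ hS (tmapOrbit_succ α (S 0)) (tmapOrbit_zero α (S 0)).symm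
  intro n j
  rw [← binomConv_extendCoord_succ]
  exact congrFun (congrFun hOrbit n) j

/-- The `j`-th coordinate (0-indexed; paper index `j+1`) of `T_{α,d}^n(θ)` equals
`Σ_{i=0}^{j+1} C(n, j+1−i)·θ_i` with `θ₀ = α`.  The ℤ-iteration of the invertible map
`T_{α,d}` is encoded by a two-sided orbit `S : ℤ → 𝕋^d` with `S (m+1) = T_{α,d} (S m)`,
so that `S n = T_{α,d}^n (S 0)`; `Ring.choose n m` is the generalized binomial
coefficient `C(n,m)` for integer `n`. -/
theorem stmt_7 (d : ℕ) (hd : 1 ≤ d) (α : ℝ)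
    (S : ℤ → Fin d → UnitAddCircle)
    (hS : ∀ m : ℤ, S (m + 1) = Tmap d α (S m)) :
    ∀ (n : ℤ) (j : Fin d),
      S n j = Ring.choose n ((j : ℕ) + 1) • (α : UnitAddCircle) +
        ∑ i ∈ Finset.univ.filter (fun i : Fin d => i ≤ j),
          Ring.choose n ((j : ℕ) - (i : ℕ)) • S 0 i :=
  stmt_7_general d α S hS
end

section
/- Let d ≥ 1, let p be a real polynomial of degree at most d with p(0) = 0, and let ε > 0. Then there exist a nonempty compact metric space X, a homeomorphism T : X → X such that every orbit {Tⁿx : n ∈ ℤ} is dense in X, and a nonempty open set U ⊆ X such that {n ∈ ℤ : U ∩ T^{−n}U ∩ T^{−2n}U ∩ ⋯ ∩ T^{−dn}U ≠ ∅} ⊆ {n ∈ ℤ : ‖p(n)‖ < ε}. -/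
/-- `‖a‖`: the distance from a real number `a` to the nearest integer. -/
noncomputable def distToInt (a : ℝ) : ℝ := sInf (Set.range fun m : ℤ => |a - (m : ℝ)|)

/-!
Write `p(n) = ∑_{k=1}^{d} c_k n^k` and realise each monomial in a unipotent skew product on a
torus: a coordinate `f : ℤ → 𝕋` along an orbit with `Δ₁^k f ≡ c_k` satisfies `Δₙ^k f ≡ n^k c_k`,
while `Δₙ^k f(0)` is a signed binomial combination of `f(0), f(n), …, f(kn)`. If these values are
all `δ`-close to one point, `‖n^k c_k‖ ≤ 2^k δ`, and summing over `k` makes `‖p(n)‖` small.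
Restricting to a minimal subsystem (Zorn) makes every orbit dense, and `U` is a small ball.
-/

open Function Set
open scoped fwdDiff

lemma distToInt_eq_norm (a : ℝ) : distToInt a = ‖(a : UnitAddCircle)‖ := by
  rw [AddCircle.norm_eq, inv_one, one_mul, mul_one]
  exact IsLeast.csInf_eq ⟨⟨round a, rfl⟩, by rintro _ ⟨m, rfl⟩; exact round_le a m⟩

section fwdDiff

variable {M G : Type*} [AddCommMonoid M] [AddCommGroup G]

lemma commute_fwdDiff (a b : M) : Function.Commute (Δ_[a] : (M → G) → M → G) Δ_[b] := by
  intro f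
  ext m
  simp only [fwdDiff, add_right_comm m b a]
  abel

lemma fwdDiff_sub_const (h : M) (f : M → G) (b : G) : Δ_[h] (fun m ↦ f m - b) = Δ_[h] f := by
  ext m
  simp only [fwdDiff, sub_sub_sub_cancel_right]

lemma norm_fwdDiff_iter_le {E : Type*} [SeminormedAddCommGroup E] (h : M) (f : M → E) (k : ℕ)
    {η : ℝ} (hf : ∀ i ≤ k, ‖f (i • h)‖ ≤ η) : ‖Δ_[h] ^[k] f 0‖ ≤ 2 ^ k * η := by
  rw [fwdDiff_iter_eq_sum_shift]
  calc _ ≤ ∑ i ∈ Finset.range (k + 1), ‖((-1 : ℤ) ^ (k - i) * k.choose i) • f (0 + i • h)‖ :=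
        norm_sum_le _ _
    _ ≤ ∑ i ∈ Finset.range (k + 1), (k.choose i : ℝ) * η := by
        gcongr with i hi
        refine (norm_zsmul_le _ _).trans ?_
        rw [zero_add, norm_mul, norm_pow, norm_neg, norm_one, one_pow, one_mul]
        gcongr
        · simp
        · exact hf i (Nat.lt_succ_iff.mp (Finset.mem_range.mp hi))
    _ = 2 ^ k * η := by
        rw [← Finset.sum_mul]
        exact_mod_cast congrArg (fun s : ℕ ↦ (s : ℝ) * η) (Nat.sum_range_choose k)

lemma fwdDiff_eq_zsmul_of_fwdDiff_one {f : ℤ → G} {c : G} (hf : ∀ m, Δ_[1] f m = c) (n m : ℤ) :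
    Δ_[n] f m = n • c := by
  have hper : Periodic (fun m ↦ f m - m • c) 1 := by
    intro m
    dsimp only
    rw [add_zsmul, one_zsmul, ← hf m, fwdDiff]
    abel
  have := hper.int_mul n m
  rw [mul_one, add_zsmul] at this
  rw [fwdDiff]
  linear_combination (norm := module) this

lemma fwdDiff_iter_eq_pow_smul {f : ℤ → G} {c : G} (k : ℕ) (hf : ∀ m, Δ_[1] ^[k] f m = c)
    (n m : ℤ) : Δ_[n] ^[k] f m = n ^ k • c := by
  induction k generalizing f c with
  | zero => simpa using hf m
  | succ k ih =>
    have hf' : ∀ m, Δ_[1] ^[k] (Δ_[n] f) m = n • c := by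
      intro m
      rw [(commute_fwdDiff 1 n).iterate_left k f]
      refine fwdDiff_eq_zsmul_of_fwdDiff_one (fun m ↦ ?_) n m
      rw [← iterate_succ_apply' Δ_[1]]
      exact hf m
    rw [iterate_succ_apply, ih hf', smul_smul, pow_succ]

end fwdDiff

namespace Equiv.Perm

variable {α : Type*}

lemma preimage_range_zpow_apply (e : Perm α) (x : α) :
    e ⁻¹' range (fun n : ℤ ↦ (e ^ n) x) = range fun n : ℤ ↦ (e ^ n) x := by
  ext y
  constructor
  · rintro ⟨n, hn : (e ^ n) x = e y⟩
    refine ⟨n - 1, show (e ^ (n - 1)) x = y from ?_⟩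
    rw [sub_eq_neg_add, zpow_add, zpow_neg_one, mul_apply, hn]
    exact e.symm_apply_apply y
  · rintro ⟨n, rfl⟩
    exact ⟨n + 1, show (e ^ (n + 1)) x = e ((e ^ n) x) by rw [add_comm, zpow_one_add, mul_apply]⟩

variable [TopologicalSpace α] [CompactSpace α] [Nonempty α]

lemma exists_minimal_nonempty_isClosed_preimage_eq (f : α → α) :
    ∃ X : Set α, Minimal (fun A ↦ A.Nonempty ∧ IsClosed A ∧ f ⁻¹' A = A) X := by
  set S := {A : Set α | A.Nonempty ∧ IsClosed A ∧ f ⁻¹' A = A}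
  have hchain : ∀ C ⊆ S, IsChain (· ⊆ ·) C → C.Nonempty → ∃ lb ∈ S, ∀ A ∈ C, lb ⊆ A := by
    intro C hC hCchain hCne
    have : Nonempty C := hCne.to_subtype
    refine ⟨⋂₀ C, ⟨?_, isClosed_sInter fun A hA ↦ (hC hA).2.1, ?_⟩, fun _ ↦ sInter_subset_of_mem⟩
    · exact IsCompact.nonempty_sInter_of_directed_nonempty_isCompact_isClosed
        (show IsChain (· ⊇ ·) C from hCchain.symm).directedOn (fun A hA ↦ (hC hA).1)
        (fun A hA ↦ (hC hA).2.1.isCompact) fun A hA ↦ (hC hA).2.1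
    · rw [preimage_sInter, sInter_eq_biInter]
      exact iInter₂_congr fun A hA ↦ (hC hA).2.2
  obtain ⟨X, -, hX⟩ := zorn_superset_nonempty S hchain univ
    ⟨univ_nonempty, isClosed_univ, preimage_univ⟩
  exact ⟨X, hX⟩

theorem exists_minimal_subsystem (e : Perm α) (he : Continuous e) (he' : Continuous e.symm) :
    ∃ (X : Set α) (hX : ∀ x, e x ∈ X ↔ x ∈ X), X.Nonempty ∧ IsClosed X ∧
      ∀ y : X, Dense (range fun n : ℤ ↦ (e.subtypePerm hX ^ n) y) := by
  obtain ⟨X, ⟨hXne, hXcl, hXinv⟩, hXmin⟩ := exists_minimal_nonempty_isClosed_preimage_eq e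
  have hX : ∀ x, e x ∈ X ↔ x ∈ X := fun x ↦ Set.ext_iff.mp hXinv x
  refine ⟨X, hX, hXne, hXcl, fun y ↦ ?_⟩
  rw [Subtype.dense_iff, ← range_comp]
  simp only [comp_def, subtypePerm_zpow, subtypePerm_apply]
  set O := range fun n : ℤ ↦ (e ^ n) y.1
  have hO : closure O ⊆ X := closure_minimal (range_subset_iff.2 fun n ↦
    (by simpa using ((e.subtypePerm hX ^ n) y).2)) hXcl
  refine hXmin ⟨⟨y, subset_closure ⟨0, rfl⟩⟩, isClosed_closure, ?_⟩ hO
  calc e ⁻¹' closure O = closure (e ⁻¹' O) := (Homeomorph.mk e he he').preimage_closure O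
    _ = closure O := by rw [e.preimage_range_zpow_apply]

end Equiv.Perm

/-- Coordinate `y κ j` is the `j`-th entry of the `κ`-th block, a unipotent Jordan block of size
`d`. -/
abbrev WeylTorus (d : ℕ) : Type := Fin d → Fin d → UnitAddCircle

def weylShift (d : ℕ) : Module.End ℤ (WeylTorus d) where
  toFun y κ j := if (j : ℕ) = 0 then 0 else y κ ⟨j - 1, by omega⟩
  map_add' y z := by ext κ j; by_cases h : (j : ℕ) = 0 <;> simp [h]
  map_smul' a y := by ext κ j; by_cases h : (j : ℕ) = 0 <;> simp [h]

lemma weylShift_apply (d : ℕ) (y : WeylTorus d) (κ j : Fin d) :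
    weylShift d y κ j = if (j : ℕ) = 0 then 0 else y κ ⟨j - 1, by omega⟩ := rfl

lemma weylShift_pow_apply_of_lt (d k : ℕ) (y : WeylTorus d) (κ j : Fin d) (hj : (j : ℕ) < k) :
    (weylShift d ^ k) y κ j = 0 := by
  induction k generalizing j with
  | zero => omega
  | succ k ih =>
    rw [pow_succ', Module.End.mul_apply, weylShift_apply]
    split_ifs
    · rfl
    · exact ih _ (by dsimp only; omega)

lemma isNilpotent_weylShift (d : ℕ) : IsNilpotent (weylShift d) :=
  ⟨d, LinearMap.ext fun y ↦ funext₂ fun κ j ↦ weylShift_pow_apply_of_lt d d y κ j j.isLt⟩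

section weylMap

variable {d : ℕ} (c : Fin d → ℝ)

/-- `y ↦ (1 + N) y + b`, with `N = weylShift d` nilpotent (so `1 + N` is invertible) and `b`
carrying `c κ` in the first entry of block `κ`. -/
noncomputable def weylMap : Equiv.Perm (WeylTorus d) :=
  (Equiv.ofBijective _ ((Module.End.isUnit_iff _).mp
    (isNilpotent_weylShift d).isUnit_one_add)).trans
    (Equiv.addRight fun κ j ↦ if (j : ℕ) = 0 then (c κ : UnitAddCircle) else 0)

lemma weylMap_apply (y : WeylTorus d) (κ j : Fin d) :
    weylMap c y κ j =
      y κ j + if (j : ℕ) = 0 then (c κ : UnitAddCircle) else y κ ⟨j - 1, by omega⟩ := by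
  simp only [weylMap, Equiv.trans_apply, Equiv.ofBijective_apply, Equiv.coe_addRight,
    LinearMap.add_apply, Module.End.one_apply, Pi.add_apply, weylShift_apply]
  split_ifs <;> simp

lemma continuous_weylMap : Continuous (weylMap c) := by
  refine continuous_pi fun κ ↦ continuous_pi fun j ↦ ?_
  simp only [weylMap_apply]
  split_ifs <;> fun_prop

lemma weylMap_zpow_add_one_apply (m : ℤ) (y : WeylTorus d) :
    (weylMap c ^ (m + 1)) y = weylMap c ((weylMap c ^ m) y) := by
  rw [add_comm, zpow_one_add, Equiv.Perm.mul_apply]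

lemma fwdDiff_iter_weylMap_orbit (y : WeylTorus d) (κ : Fin d) :
    ∀ (j : ℕ) (hj : j < d),
      Δ_[1] ^[j + 1] (fun m : ℤ ↦ (weylMap c ^ m) y κ ⟨j, hj⟩) = fun _ ↦ (c κ : UnitAddCircle)
  | 0, hj => by ext m; simp [fwdDiff, weylMap_zpow_add_one_apply, weylMap_apply]
  | j + 1, hj => by
    rw [iterate_succ_apply, ← fwdDiff_iter_weylMap_orbit y κ j (by omega)]
    congr 1
    ext m
    simp [fwdDiff, weylMap_zpow_add_one_apply, weylMap_apply]

lemma norm_zpow_smul_le_of_forall_dist_le (x β : WeylTorus d) (n : ℤ) {δ : ℝ}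
    (hx : ∀ i ≤ d, dist ((weylMap c ^ ((i : ℤ) * n)) x) β ≤ δ) (κ : Fin d) :
    ‖n ^ ((κ : ℕ) + 1) • (c κ : UnitAddCircle)‖ ≤ 2 ^ ((κ : ℕ) + 1) * δ := by
  set f : ℤ → UnitAddCircle := fun m ↦ (weylMap c ^ m) x κ κ - β κ κ
  have hf : ∀ m, Δ_[1] ^[(κ : ℕ) + 1] f m = c κ := by
    intro m
    rw [iterate_succ_apply, fwdDiff_sub_const, ← iterate_succ_apply,
      fwdDiff_iter_weylMap_orbit c x κ κ κ.isLt]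
  rw [← fwdDiff_iter_eq_pow_smul _ hf n 0]
  refine norm_fwdDiff_iter_le n f _ fun i hi ↦ ?_
  rw [← dist_eq_norm, nsmul_eq_mul]
  exact ((dist_le_pi_dist _ _ κ).trans (dist_le_pi_dist _ _ κ)).trans (hx i (by omega))

end weylMap

lemma coe_eval_intCast_eq_sum {d : ℕ} {p : Polynomial ℝ} (hdeg : p.natDegree ≤ d)
    (hp0 : p.eval 0 = 0) (n : ℤ) :
    ((p.eval (n : ℝ) : ℝ) : UnitAddCircle) =
      ∑ κ : Fin d, n ^ ((κ : ℕ) + 1) • ((p.coeff ((κ : ℕ) + 1) : ℝ) : UnitAddCircle) := by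
  rw [p.eval_eq_sum_range' (Nat.lt_succ_of_le hdeg), Finset.sum_range_succ',
    Polynomial.coeff_zero_eq_eval_zero, hp0, zero_mul, add_zero, ← Fin.sum_univ_eq_sum_range,
    ← QuotientAddGroup.mk'_apply, map_sum]
  refine Finset.sum_congr rfl fun κ _ ↦ ?_
  rw [QuotientAddGroup.mk'_apply, ← AddCircle.coe_zsmul, zsmul_eq_mul, mul_comm]
  push_cast
  rfl

theorem stmt_9_general (d : ℕ) (p : Polynomial ℝ)
    (hdeg : p.natDegree ≤ d) (hp0 : p.eval 0 = 0) (ε : ℝ) (hε : 0 < ε) :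
    ∃ (X : Type) (_ : MetricSpace X) (_ : CompactSpace X) (_ : Nonempty X)
      (T : Equiv.Perm X),
      Continuous (⇑T) ∧ Continuous (⇑T.symm) ∧
      (∀ x : X, Dense (Set.range fun n : ℤ => (T ^ n) x)) ∧
      ∃ U : Set X, IsOpen U ∧ U.Nonempty ∧
        ∀ n : ℤ,
          (⋂ i ∈ Finset.range (d + 1), (⇑(T ^ ((i : ℤ) * n)))⁻¹' U).Nonempty →
          distToInt (p.eval (n : ℝ)) < ε := by
  set c : Fin d → ℝ := fun κ ↦ p.coeff ((κ : ℕ) + 1)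
  have hT : Continuous (weylMap c) := continuous_weylMap c
  have hT' : Continuous (weylMap c).symm := hT.continuous_symm_of_equiv_compact_to_t2
  obtain ⟨X, hX, ⟨β, hβ⟩, hXcl, hdense⟩ := (weylMap c).exists_minimal_subsystem hT hT'
  obtain ⟨δ, hδ, hδε⟩ : ∃ δ > 0, d * 2 ^ d * δ < ε :=
    ⟨ε / ((d + 1) * 2 ^ d), by positivity, by field_simp; linarith⟩
  refine ⟨X, inferInstance, isCompact_iff_compactSpace.mp hXcl.isCompact, ⟨⟨β, hβ⟩⟩,
    (weylMap c).subtypePerm hX, (hT.comp continuous_subtype_val).subtype_mk _,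
    (hT'.comp continuous_subtype_val).subtype_mk _, hdense, Subtype.val ⁻¹' Metric.ball β δ,
    Metric.isOpen_ball.preimage continuous_subtype_val,
    ⟨⟨β, hβ⟩, mem_preimage.mpr (Metric.mem_ball_self hδ)⟩, ?_⟩
  rintro n ⟨x, hx⟩
  simp only [mem_iInter, mem_preimage, Finset.mem_range, Equiv.Perm.subtypePerm_zpow,
    Equiv.Perm.subtypePerm_apply, Metric.mem_ball] at hx
  calc distToInt (p.eval (n : ℝ))
      = ‖∑ κ : Fin d, n ^ ((κ : ℕ) + 1) • (c κ : UnitAddCircle)‖ := by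
        rw [distToInt_eq_norm, coe_eval_intCast_eq_sum hdeg hp0]
    _ ≤ ∑ _κ : Fin d, 2 ^ d * δ := norm_sum_le_of_le _ fun κ _ ↦
        (norm_zpow_smul_le_of_forall_dist_le c x β n (fun i hi ↦ (hx i (by omega)).le) κ).trans
          (by gcongr; exacts [one_le_two, κ.isLt])
    _ = d * 2 ^ d * δ := by simp [mul_assoc]
    _ < ε := hδε

theorem stmt_9 (d : ℕ) (hd : 1 ≤ d) (p : Polynomial ℝ)
    (hdeg : p.natDegree ≤ d) (hp0 : p.eval 0 = 0) (ε : ℝ) (hε : 0 < ε) :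
    ∃ (X : Type) (_ : MetricSpace X) (_ : CompactSpace X) (_ : Nonempty X)
      (T : Equiv.Perm X),
      Continuous (⇑T) ∧ Continuous (⇑T.symm) ∧
      (∀ x : X, Dense (Set.range fun n : ℤ => (T ^ n) x)) ∧
      ∃ U : Set X, IsOpen U ∧ U.Nonempty ∧
        ∀ n : ℤ,
          (⋂ i ∈ Finset.range (d + 1), (⇑(T ^ ((i : ℤ) * n)))⁻¹' U).Nonempty →
          distToInt (p.eval (n : ℝ)) < ε :=
  stmt_9_general d p hdeg hp0 ε hε
end

section
/- Let d ≥ 2 and assume that F_{GP_{d−1}} ⊆ F_{SGP_{d−1}}. Then for every p ∈ W_d and every ε > 0, the set {n ∈ ℤ : ‖p(n)‖ < ε} belongs to F_{SGP_{d−1}}. -/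
/-- `⌈a⌉`: the least integer `m` with `|a − m| = ‖a‖`. -/
noncomputable def nint (a : ℝ) : ℤ := sInf { m : ℤ | |a - (m : ℝ)| = distToInt a }

/-- The class `GP d` of generalized polynomials `ℤ → ℝ` of degree `≤ d`:
`GP 1` is generated by the maps `n ↦ a·n`; each `GP d` contains `GP e` for `e < d` and
the functions `n ↦ a₀ n^{p₀} ⌈f₁(n)⌉⋯⌈f_k(n)⌉` with `f_l ∈ GP (p l)` and
`p₀ + Σ p_l = d`; and each `GP d` is closed under `⌈·⌉`, scalar multiples and sums.
(No constructor produces `GP 0`, so the degrees `p l` are automatically `≥ 1`.) -/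
inductive GP : ℕ → (ℤ → ℝ) → Prop where
  | base (a : ℝ) : GP 1 (fun n => a * (n : ℝ))
  | incl {d e : ℕ} {f : ℤ → ℝ} (hf : GP e f) (hed : e < d) : GP d f
  | mono {d : ℕ} (a₀ : ℝ) (p₀ k : ℕ) (p : Fin k → ℕ) (f : Fin k → ℤ → ℝ)
      (hf : ∀ l, GP (p l) (f l)) (hsum : p₀ + ∑ l, p l = d) (hd : 1 ≤ d) :
      GP d (fun n => a₀ * (n : ℝ) ^ p₀ * ∏ l, (nint (f l n) : ℝ))
  | ceil {d : ℕ} {f : ℤ → ℝ} (hf : GP d f) : GP d (fun n => (nint (f n) : ℝ))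
  | smul {d : ℕ} {f : ℤ → ℝ} (c : ℝ) (hf : GP d f) : GP d (fun n => c * f n)
  | add {d : ℕ} {f g : ℤ → ℝ} (hf : GP d f) (hg : GP d g) : GP d (fun n => f n + g n)

/-- `L(a₁,…,a_ℓ)`: `L(a₁) = a₁` and `L(a₁,a₂,…,a_ℓ) = a₁⌈L(a₂,…,a_ℓ)⌉`. -/
noncomputable def Lfun : List ℝ → ℝ
  | [] => 0
  | [a] => a
  | a :: b :: rest => a * (nint (Lfun (b :: rest)) : ℝ)

/-- The class `SGP d` of special generalized polynomials of degree `≤ d`: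
the functions `n ↦ L(n^{j₁}a₁,…,n^{j_ℓ}a_ℓ)` with `1 ≤ ℓ ≤ d`, `j_t ≥ 1`, `Σ j_t ≤ d`. -/
def SGP (d : ℕ) (f : ℤ → ℝ) : Prop :=
  ∃ (ℓ : ℕ) (a : Fin ℓ → ℝ) (j : Fin ℓ → ℕ),
    1 ≤ ℓ ∧ ℓ ≤ d ∧ (∀ t, 1 ≤ j t) ∧ (∑ t, j t) ≤ d ∧
    f = fun n : ℤ => Lfun (List.ofFn fun t => (n : ℝ) ^ (j t) * a t)

/-- The family `F_{GP_d}` of subsets of `ℤ` containing some set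
`⋂_{i=1}^k {n : ‖P_i(n)‖ < ε_i}` with `P_i ∈ GP d` and `ε_i > 0`. -/
def FGP (d : ℕ) : Set (Set ℤ) :=
  { A | ∃ (k : ℕ) (P : Fin k → ℤ → ℝ) (ε : Fin k → ℝ),
      1 ≤ k ∧ (∀ i, GP d (P i)) ∧ (∀ i, 0 < ε i) ∧
      (⋂ i, { n : ℤ | distToInt (P i n) < ε i }) ⊆ A }

/-- The family `F_{SGP_d}`, defined like `F_{GP_d}` with `SGP d` in place of `GP d`. -/
def FSGP (d : ℕ) : Set (Set ℤ) :=
  { A | ∃ (k : ℕ) (P : Fin k → ℤ → ℝ) (ε : Fin k → ℝ),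
      1 ≤ k ∧ (∀ i, SGP d (P i)) ∧ (∀ i, 0 < ε i) ∧
      (⋂ i, { n : ℤ | distToInt (P i n) < ε i }) ⊆ A }

/-- `SW d`: the functions `n ↦ ∏_{i=1}^ℓ (w_i(n) − ⌈w_i(n)⌉)` with `ℓ ≥ 2`, `r_i ≥ 1`,
`w_i ∈ GP (r i)` and `r₁+⋯+r_ℓ ≤ d`. -/
def SW (d : ℕ) (g : ℤ → ℝ) : Prop :=
  ∃ (ℓ : ℕ) (r : Fin ℓ → ℕ) (w : Fin ℓ → ℤ → ℝ),
    2 ≤ ℓ ∧ (∀ i, 1 ≤ r i) ∧ (∀ i, GP (r i) (w i)) ∧ (∑ i, r i) ≤ d ∧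
    g = fun n : ℤ => ∏ i, (w i n - (nint (w i n) : ℝ))

/-- `W d`: finite real linear combinations of functions in `SW d`. -/
def Wset (d : ℕ) : Set (ℤ → ℝ) :=
  { p | ∃ (m : ℕ) (c : Fin m → ℝ) (g : Fin m → ℤ → ℝ),
      1 ≤ m ∧ (∀ j, SW d (g j)) ∧ p = fun n : ℤ => ∑ j, c j * g j n }

/-!
Every factor `w_i(n) − ⌈w_i(n)⌉` of a product in `W_d` has absolute value `‖w_i(n)‖ ≤ 1/2`,
so the product is small as soon as one of the `‖w_i(n)‖` is small, and `p(n)` is small as soon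
as all of them are. Since a product in `W_d` has at least two factors of degree `≥ 1`, each
`w_i` has degree `≤ d − 1`; hence `{n : ‖p(n)‖ < ε}` is in `F_{GP_{d−1}} ⊆ F_{SGP_{d−1}}`.
-/

lemma distToInt_eq_abs_sub_round (a : ℝ) : distToInt a = |a - (round a : ℝ)| := by
  refine le_antisymm (csInf_le ⟨0, ?_⟩ ⟨round a, rfl⟩) (le_csInf ⟨_, ⟨0, rfl⟩⟩ ?_)
  · rintro x ⟨m, rfl⟩
    positivity
  · rintro x ⟨m, rfl⟩
    exact round_le a m

lemma abs_sub_nint (a : ℝ) : |a - (nint a : ℝ)| = distToInt a := by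
  have hround : round a ∈ { m : ℤ | |a - (m : ℝ)| = distToInt a } :=
    (distToInt_eq_abs_sub_round a).symm
  refine Int.csInf_mem ⟨_, hround⟩ ⟨⌊a - distToInt a⌋, fun m hm => ?_⟩
  have hm' : a - distToInt a ≤ m := by
    linarith [(abs_sub_le_iff.mp (le_of_eq hm)).1]
  exact_mod_cast (Int.floor_le _).trans hm'

lemma distToInt_nonneg (a : ℝ) : 0 ≤ distToInt a := by
  rw [distToInt_eq_abs_sub_round]
  positivity

lemma distToInt_le_half (a : ℝ) : distToInt a ≤ 1 / 2 := by
  rw [distToInt_eq_abs_sub_round]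
  exact abs_sub_round a

lemma distToInt_le_abs (a : ℝ) : distToInt a ≤ |a| := by
  rw [distToInt_eq_abs_sub_round]
  simpa using round_le a 0

lemma abs_prod_sub_nint_le {ι : Type*} [Fintype ι] (x : ι → ℝ) (i : ι) :
    |∏ j, (x j - (nint (x j) : ℝ))| ≤ distToInt (x i) := by
  classical
  simp only [Finset.abs_prod, abs_sub_nint]
  rw [← Finset.mul_prod_erase _ _ (Finset.mem_univ i)]
  refine mul_le_of_le_one_right (distToInt_nonneg _) (Finset.prod_le_one ?_ ?_)
  · exact fun j _ => distToInt_nonneg _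
  · exact fun j _ => (distToInt_le_half _).trans (by norm_num)

lemma GP.of_le {e d : ℕ} {f : ℤ → ℝ} (hf : GP e f) (hed : e ≤ d) : GP d f := by
  rcases hed.lt_or_eq with hlt | rfl
  · exact GP.incl hf hlt
  · exact hf

lemma add_one_le_sum_of_one_le {ι : Type*} [Fintype ι] {r : ι → ℕ} (hr : ∀ i, 1 ≤ r i)
    (hcard : 1 < Fintype.card ι) (i : ι) : r i + 1 ≤ ∑ j, r j := by
  classical
  obtain ⟨j, hji⟩ := Fintype.exists_ne_of_one_lt_card hcard i
  calc r i + 1 ≤ r i + r j := Nat.add_le_add_left (hr j) _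
    _ = ∑ k ∈ {i, j}, r k := (Finset.sum_pair hji.symm).symm
    _ ≤ ∑ k, r k := Finset.sum_le_sum_of_subset (Finset.subset_univ _)

lemma mem_FGP_of_iInter_subset {d : ℕ} {ι : Type*} [Fintype ι] [Nonempty ι] {P : ι → ℤ → ℝ}
    (hP : ∀ i, GP d (P i)) {δ : ℝ} (hδ : 0 < δ) {A : Set ℤ}
    (hA : (⋂ i, { n : ℤ | distToInt (P i n) < δ }) ⊆ A) : A ∈ FGP d := by
  let e := Fintype.equivFin ι
  refine ⟨Fintype.card ι, fun k => P (e.symm k), fun _ => δ, Fintype.card_pos,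
    fun k => hP _, fun _ => hδ, fun n hn => hA ?_⟩
  simp only [Set.mem_iInter, Set.mem_ofPred_eq] at hn ⊢
  intro i
  simpa using hn (e i)

lemma setOf_distToInt_lt_mem_FGP_of_mem_Wset {d : ℕ} {p : ℤ → ℝ} (hp : p ∈ Wset d)
    {ε : ℝ} (hε : 0 < ε) : { n : ℤ | distToInt (p n) < ε } ∈ FGP (d - 1) := by
  obtain ⟨m, c, g, hm, hSW, rfl⟩ := hp
  choose ℓ r w hℓ hr hw hsum hg using hSW
  have : Nonempty (Σ j : Fin m, Fin (ℓ j)) := ⟨⟨⟨0, hm⟩, ⟨0, by have := hℓ ⟨0, hm⟩; omega⟩⟩⟩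
  set C := ∑ j, |c j|
  have hC : 0 ≤ C := Finset.sum_nonneg fun j _ => abs_nonneg _
  have hδ : 0 < ε / (C + 1) := div_pos hε (by linarith)
  have hdeg (s : Σ j : Fin m, Fin (ℓ j)) : GP (d - 1) (w s.1 s.2) := by
    have := add_one_le_sum_of_one_le (hr s.1) (by rw [Fintype.card_fin]; exact hℓ s.1) s.2
    exact (hw s.1 s.2).of_le (by have := hsum s.1; omega)
  refine mem_FGP_of_iInter_subset hdeg hδ fun n hn => ?_
  simp only [Set.mem_iInter, Set.mem_ofPred_eq] at hn ⊢
  have hgn (j : Fin m) : |g j n| ≤ ε / (C + 1) := by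
    rw [hg j]
    exact (abs_prod_sub_nint_le _ ⟨0, by have := hℓ j; omega⟩).trans (hn ⟨j, _⟩).le
  calc distToInt (∑ j, c j * g j n) ≤ |∑ j, c j * g j n| := distToInt_le_abs _
    _ ≤ ∑ j, |c j| * |g j n| :=
        (Finset.abs_sum_le_sum_abs _ _).trans_eq (by simp only [abs_mul])
    _ ≤ ∑ j, |c j| * (ε / (C + 1)) := by gcongr with j; exact hgn j
    _ = C / (C + 1) * ε := by rw [← Finset.sum_mul]; ring
    _ < ε := mul_lt_of_lt_one_left hε ((div_lt_one (by linarith)).mpr (by linarith))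

theorem stmt_12_general (d : ℕ) (hind : FGP (d - 1) ⊆ FSGP (d - 1))
    (p : ℤ → ℝ) (hp : p ∈ Wset d) (ε : ℝ) (hε : 0 < ε) :
    { n : ℤ | distToInt (p n) < ε } ∈ FSGP (d - 1) :=
  hind (setOf_distToInt_lt_mem_FGP_of_mem_Wset hp hε)

theorem stmt_12 (d : ℕ) (hd : 2 ≤ d) (hind : FGP (d - 1) ⊆ FSGP (d - 1))
    (p : ℤ → ℝ) (hp : p ∈ Wset d) (ε : ℝ) (hε : 0 < ε) :
    { n : ℤ | distToInt (p n) < ε } ∈ FSGP (d - 1) :=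
  stmt_12_general d hind p hp ε hε
end

section
/- Let E ⊆ ℤ be a syndetic set. Then there exist a nonempty compact metric space X, a homeomorphism T : X → X such that every orbit {Tⁿx : n ∈ ℤ} is dense in X, and a nonempty open set U ⊆ X such that for every nonempty finite set α ⊆ ℤ: if ⋂_{n∈α} T^{−n}U ≠ ∅ then ⋂_{n∈α} (E − n) ≠ ∅. -/
/-- `E ⊆ ℤ` is syndetic: there is `N` such that every interval of `N` consecutive
integers meets `E`. -/
def Syndetic (E : Set ℤ) : Prop :=
  ∃ N : ℕ, ∀ i : ℤ, ∃ j ∈ E, i ≤ j ∧ j < i + N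

/-!
Encode `E` as the point `e = 1_E` of the full shift `Bool^ℤ` and use Zorn's lemma to pass to a
minimal subsystem `K` of the orbit closure of `e`; in a minimal subsystem every orbit is dense.
Take `U = {x ∈ K | x 0 = true}`. Having a `true` somewhere in the window `[0, N)` is a closed
condition, satisfied along the orbit of `e` by syndeticity, hence on all of `K`, so `U ≠ ∅`.
If `x ∈ K` has `x n = true` for all `n ∈ α`, then some shift `shift m e` of `e` agrees with `x`
on the finite set `α`, i.e. `m + n ∈ E` for all `n ∈ α`.
-/
open Set

namespace Equiv.Perm

variable {X : Type*} (T : Perm X)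

def IsSubsystem [TopologicalSpace X] (K : Set X) : Prop :=
  K.Nonempty ∧ IsClosed K ∧ ∀ x, T x ∈ K ↔ x ∈ K

lemma coe_subtypePerm_zpow {K : Set X} (hK : ∀ x, T x ∈ K ↔ x ∈ K) (n : ℤ) (x : K) :
    ((T.subtypePerm hK ^ n) x : X) = (T ^ n) x := by
  simp only [subtypePerm_zpow, subtypePerm_apply]

lemma zpow_apply_mem {K : Set X} (hK : ∀ x, T x ∈ K ↔ x ∈ K) (n : ℤ) {x : X}
    (hx : x ∈ K) : (T ^ n) x ∈ K :=
  T.coe_subtypePerm_zpow hK n ⟨x, hx⟩ ▸ ((T.subtypePerm hK ^ n) ⟨x, hx⟩).2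

lemma preimage_range_zpow (x : X) :
    T ⁻¹' range (fun n : ℤ => (T ^ n) x) = range fun n : ℤ => (T ^ n) x := by
  ext y
  simp only [mem_preimage, mem_range]
  constructor
  · rintro ⟨n, hn⟩
    exact ⟨n - 1, T.injective <| by rw [← hn, ← mul_apply, ← zpow_one_add, add_sub_cancel]⟩
  · rintro ⟨n, rfl⟩
    exact ⟨n + 1, by rw [add_comm, zpow_add, zpow_one, mul_apply]⟩

variable [TopologicalSpace X]

lemma isSubsystem_closure_range_zpow (hT : Continuous T) (hT' : Continuous T.symm) (x : X) :
    T.IsSubsystem (closure (range fun n : ℤ => (T ^ n) x)) := by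
  refine ⟨⟨x, subset_closure ⟨0, rfl⟩⟩, isClosed_closure, Set.ext_iff.1 ?_⟩
  conv_rhs => rw [← T.preimage_range_zpow x]
  exact (Homeomorph.mk T hT hT').preimage_closure _

lemma IsSubsystem.exists_minimal [CompactSpace X] {K₀ : Set X} (hK₀ : T.IsSubsystem K₀) :
    ∃ K ⊆ K₀, Minimal T.IsSubsystem K := by
  refine zorn_superset_nonempty _ (fun c hc hchain ⟨K, hK⟩ => ⟨⋂₀ c, ⟨?_, ?_, ?_⟩,
    fun _ => sInter_subset_of_mem⟩) _ hK₀
  · have : Nonempty c := ⟨⟨K, hK⟩⟩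
    refine IsCompact.nonempty_sInter_of_directed_nonempty_isCompact_isClosed
      (fun L hL M hM => ?_) (fun L hL => (hc hL).1) (fun L hL => (hc hL).2.1.isCompact)
      fun L hL => (hc hL).2.1
    rcases hchain.total hL hM with h | h
    exacts [⟨L, hL, subset_rfl, h⟩, ⟨M, hM, h, subset_rfl⟩]
  · exact isClosed_sInter fun L hL => (hc hL).2.1
  · intro x
    simp only [mem_sInter]
    exact forall₂_congr fun L hL => (hc hL).2.2 x

lemma subset_closure_range_zpow_of_minimal (hT : Continuous T) (hT' : Continuous T.symm)
    {K : Set X} (hK : Minimal T.IsSubsystem K) {x : X} (hx : x ∈ K) :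
    K ⊆ closure (range fun n : ℤ => (T ^ n) x) :=
  hK.2 (T.isSubsystem_closure_range_zpow hT hT' x) <| closure_minimal
    (range_subset_iff.2 fun n => T.zpow_apply_mem hK.1.2.2 n hx) hK.1.2.1

lemma continuous_subtypePerm (hT : Continuous T) {K : Set X} (hK : ∀ x, T x ∈ K ↔ x ∈ K) :
    Continuous (T.subtypePerm hK) :=
  (hT.comp continuous_subtype_val).subtype_mk _

lemma continuous_subtypePerm_symm (hT' : Continuous T.symm) {K : Set X}
    (hK : ∀ x, T x ∈ K ↔ x ∈ K) : Continuous (T.subtypePerm hK).symm :=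
  (hT'.comp continuous_subtype_val).subtype_mk _

lemma dense_range_zpow_subtypePerm_of_minimal (hT : Continuous T) (hT' : Continuous T.symm)
    {K : Set X} (hK : Minimal T.IsSubsystem K) (x : K) :
    Dense (range fun n : ℤ => (T.subtypePerm hK.1.2.2 ^ n) x) := by
  refine dense_iff_closure_eq.2 (eq_univ_of_forall fun y => closure_subtype.2 ?_)
  rw [← range_comp]
  simp only [Function.comp_def, coe_subtypePerm_zpow]
  exact T.subset_closure_range_zpow_of_minimal hT hT' hK x.2 y.2

end Equiv.Perm

open SymbolicDynamics.FullShift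

def shiftPerm (A : Type*) : Equiv.Perm (ℤ → A) where
  toFun := shift 1
  invFun := shift (-1)
  left_inv y := by rw [← shift_add, add_neg_cancel, shift_zero]
  right_inv y := by rw [← shift_add, neg_add_cancel, shift_zero]

lemma coe_shiftPerm_zpow (A : Type*) (n : ℤ) : ⇑(shiftPerm A ^ n) = shift n := by
  induction n using Int.induction_on with
  | zero => ext; simp
  | succ n ih =>
    funext y
    rw [zpow_add_one, Equiv.Perm.mul_apply, ih, add_comm]
    exact (shift_add 1 (n : ℤ) y).symm
  | pred n ih =>
    funext y
    rw [zpow_sub_one, Equiv.Perm.mul_apply, ih, sub_eq_neg_add]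
    exact (shift_add (-1) (-(n : ℤ)) y).symm

lemma continuous_shiftPerm (A : Type*) [TopologicalSpace A] : Continuous (shiftPerm A) :=
  continuous_shift 1

lemma continuous_shiftPerm_symm (A : Type*) [TopologicalSpace A] :
    Continuous (shiftPerm A).symm :=
  continuous_shift (-1)

lemma Syndetic.exists_mem_Ico_apply_eq_true {E : Set ℤ} (hE : Syndetic E) :
    ∃ N : ℕ, ∀ y ∈ closure (range fun m : ℤ => shift m E.boolIndicator),
      ∃ j ∈ Finset.Ico (0 : ℤ) N, y j = true := by
  obtain ⟨N, hN⟩ := hE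
  refine ⟨N, fun y hy => ?_⟩
  change y ∈ {y : ℤ → Bool | ∃ j ∈ Finset.Ico (0 : ℤ) N, y j = true}
  refine closure_minimal ?_ ?_ hy
  · rintro _ ⟨m, rfl⟩
    obtain ⟨j, hjE, hmj, hjm⟩ := hN m
    refine ⟨j - m, Finset.mem_Ico.2 ⟨by omega, by omega⟩, ?_⟩
    dsimp only
    rwa [shift_apply, add_sub_cancel, ← mem_iff_boolIndicator]
  · convert (isOpen_cylinder (Finset.Ico (0 : ℤ) N) fun _ => false).isClosed_compl
    ext y
    simp [cylinder, and_assoc]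

lemma nonempty_iInter_of_mem_closure_range_shift_boolIndicator {E : Set ℤ} {y : ℤ → Bool}
    (hy : y ∈ closure (range fun m : ℤ => shift m E.boolIndicator)) {α : Finset ℤ}
    (hα : ∀ n ∈ α, y n = true) : (⋂ n ∈ α, {m : ℤ | m + n ∈ E}).Nonempty := by
  obtain ⟨_, hm, m, rfl⟩ := mem_closure_iff.1 hy _ (isOpen_cylinder α y) fun _ _ => rfl
  exact ⟨m, mem_iInter₂.2 fun n hn => (mem_iff_boolIndicator E _).2 ((hm n hn).trans (hα n hn))⟩

theorem stmt_16 (E : Set ℤ) (hE : Syndetic E) :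
    ∃ (X : Type) (_ : MetricSpace X) (_ : CompactSpace X) (_ : Nonempty X)
      (T : Equiv.Perm X),
      Continuous (⇑T) ∧ Continuous (⇑T.symm) ∧
      (∀ x : X, Dense (Set.range fun n : ℤ => (T ^ n) x)) ∧
      ∃ U : Set X, IsOpen U ∧ U.Nonempty ∧
        ∀ α : Finset ℤ, α.Nonempty →
          (⋂ n ∈ α, (⇑(T ^ n))⁻¹' U).Nonempty →
          (⋂ n ∈ α, { m : ℤ | m + n ∈ E }).Nonempty := by
  set σ := shiftPerm Bool
  have hσ := continuous_shiftPerm Bool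
  have hσ' := continuous_shiftPerm_symm Bool
  have horbit : range (fun n : ℤ => (σ ^ n) E.boolIndicator) =
      range fun n : ℤ => shift n E.boolIndicator := by
    simp only [σ, coe_shiftPerm_zpow]
  obtain ⟨K, hKK₀, hK⟩ := (σ.isSubsystem_closure_range_zpow hσ hσ' E.boolIndicator).exists_minimal
  rw [horbit] at hKK₀
  obtain ⟨hKne, hKcl, hKinv⟩ := hK.1
  have hKc : CompactSpace K := isCompact_iff_compactSpace.1 hKcl.isCompact
  have hzpow (n : ℤ) (x : K) : ((σ.subtypePerm hKinv ^ n) x : ℤ → Bool) 0 = (x : ℤ → Bool) n := by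
    rw [Equiv.Perm.coe_subtypePerm_zpow, coe_shiftPerm_zpow, shift_apply, add_zero]
  obtain ⟨N, hN⟩ := hE.exists_mem_Ico_apply_eq_true
  let := TopologicalSpace.metrizableSpaceMetric K
  refine ⟨K, _, hKc, hKne.to_subtype, σ.subtypePerm hKinv, σ.continuous_subtypePerm hσ hKinv,
    σ.continuous_subtypePerm_symm hσ' hKinv, σ.dense_range_zpow_subtypePerm_of_minimal hσ hσ' hK,
    {x | (x : ℤ → Bool) 0 = true}, ?_, ?_, fun α _ ⟨x, hx⟩ => ?_⟩
  · exact (isOpen_discrete {true}).preimage (f := fun x : K => (x : ℤ → Bool) 0)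
      ((continuous_apply 0).comp continuous_subtype_val)
  · obtain ⟨y, hy⟩ := hKne
    obtain ⟨j, -, hj⟩ := hN y (hKK₀ hy)
    exact ⟨(σ.subtypePerm hKinv ^ j) ⟨y, hy⟩, (hzpow j ⟨y, hy⟩).trans hj⟩
  · refine nonempty_iInter_of_mem_closure_range_shift_boolIndicator (hKK₀ x.2) fun n hn => ?_
    rw [← hzpow]
    exact mem_iInter₂.1 hx n hn
end

section
/- Let X be a nonempty compact metric space and T : X → X a homeomorphism such that every orbit {Tⁿx : n ∈ ℤ} is dense in X, and let U ⊆ X be a nonempty open set. Then there exists a syndetic set E ⊆ ℤ such that for every nonempty finite set α ⊆ ℤ: if ⋂_{n∈α} (E − n) ≠ ∅ then ⋂_{n∈α} T^{−n}U ≠ ∅. -/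
theorem Equiv.Perm.continuous_zpow {X : Type*} [TopologicalSpace X] {T : Equiv.Perm X}
    (hT : Continuous T) (hT' : Continuous T.symm) : ∀ n : ℤ, Continuous ⇑(T ^ n)
  | (n : ℕ) => by simpa [Equiv.Perm.coe_pow] using hT.iterate n
  | .negSucc n => by
    simpa [zpow_negSucc, ← inv_pow, Equiv.Perm.coe_pow, Equiv.Perm.inv_def] using
      hT'.iterate (n + 1)

theorem syndetic_of_forall_exists_add_mem {E : Set ℤ} (s : Finset ℤ)
    (hs : ∀ i : ℤ, ∃ n ∈ s, i + n ∈ E) : Syndetic E := by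
  set M : ℕ := s.sup Int.natAbs
  refine ⟨2 * M + 1, fun i => ?_⟩
  obtain ⟨n, hns, hn⟩ := hs (i + M)
  have hnM : n.natAbs ≤ M := Finset.le_sup hns
  refine ⟨i + M + n, hn, ?_, ?_⟩ <;> omega

theorem exists_finset_forall_zpow_mem_of_dense_orbit {X : Type*} [TopologicalSpace X]
    [CompactSpace X] {T : Equiv.Perm X} (hT : Continuous T) (hT' : Continuous T.symm)
    (hmin : ∀ x : X, Dense (Set.range fun n : ℤ => (T ^ n) x))
    {U : Set X} (hU : IsOpen U) (hUne : U.Nonempty) :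
    ∃ s : Finset ℤ, ∀ y : X, ∃ n ∈ s, (T ^ n) y ∈ U := by
  have hcover : Set.univ ⊆ ⋃ n : ℤ, ⇑(T ^ n) ⁻¹' U := fun y _ => by
    obtain ⟨_, ⟨n, rfl⟩, hnU⟩ := (hmin y).exists_mem_open hU hUne
    exact Set.mem_iUnion.2 ⟨n, hnU⟩
  obtain ⟨s, hs⟩ := isCompact_univ.elim_finite_subcover _
    (fun n => hU.preimage (Equiv.Perm.continuous_zpow hT hT' n)) hcover
  exact ⟨s, fun y => by simpa using hs (Set.mem_univ y)⟩

theorem stmt_17 (X : Type) [MetricSpace X] [CompactSpace X] [Nonempty X]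
    (T : Equiv.Perm X) (hT : Continuous (⇑T)) (hT' : Continuous (⇑T.symm))
    (hmin : ∀ x : X, Dense (Set.range fun n : ℤ => (T ^ n) x))
    (U : Set X) (hU : IsOpen U) (hUne : U.Nonempty) :
    ∃ E : Set ℤ, Syndetic E ∧
      ∀ α : Finset ℤ, α.Nonempty →
        (⋂ n ∈ α, { m : ℤ | m + n ∈ E }).Nonempty →
        (⋂ n ∈ α, (⇑(T ^ n))⁻¹' U).Nonempty := by
  obtain ⟨x⟩ := ‹Nonempty X›
  have hzpow_add (m n : ℤ) : (T ^ (m + n)) x = (T ^ n) ((T ^ m) x) := by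
    rw [add_comm, zpow_add, Equiv.Perm.mul_apply]
  refine ⟨{n : ℤ | (T ^ n) x ∈ U}, ?_, ?_⟩
  · obtain ⟨s, hs⟩ := exists_finset_forall_zpow_mem_of_dense_orbit hT hT' hmin hU hUne
    refine syndetic_of_forall_exists_add_mem s fun i => ?_
    obtain ⟨n, hns, hn⟩ := hs ((T ^ i) x)
    exact ⟨n, hns, by simpa only [Set.mem_ofPred_eq, hzpow_add] using hn⟩
  · rintro α - ⟨m, hm⟩
    simp only [Set.mem_iInter, Set.mem_ofPred_eq] at hm
    exact ⟨(T ^ m) x, Set.mem_iInter₂.2 fun n hn => by simpa only [Set.mem_preimage, ← hzpow_add] using hm n hn⟩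
end

section
/- Let E ⊆ ℤ with BD*(E) > 0. Then there exist a measure-preserving system (X, 𝒳, μ, T) and a measurable set A ∈ 𝒳 with μ(A) = BD*(E) such that for every nonempty finite set α ⊆ ℤ one has BD*(⋂_{n∈α} (E − n)) ≥ μ(⋂_{n∈α} T^{−n}A). -/
open MeasureTheory

/-- The upper Banach density
`BD*(S) = limsup_{N→∞} sup_{M∈ℤ} |S ∩ {M, M+1, …, M+N−1}| / N`. -/
noncomputable def upperBanachDensity (S : Set ℤ) : ℝ :=
  Filter.limsup
    (fun N : ℕ => ⨆ M : ℤ, ((S ∩ Set.Ico M (M + (N : ℤ))).ncard : ℝ) / (N : ℝ))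
    Filter.atTop

/-!
Code `E` by the point `x = 1_E` of the compact shift space `{0,1}^ℤ`. Choose windows
`[M, M + N)` with `N → ∞` along which the density of `E` tends to `BD*(E)`, and let `μ` be a
weak-* limit point (along an ultrafilter) of the uniform distributions on the orbit segments
`σ^m x`, `m ∈ [M, M + N)`. Cylinder sets are clopen, so their boundaries are null and `μ` of a
cylinder is the limit of its visit frequencies; shifting a window changes a count by at most one,
so `μ` is `σ`-invariant on cylinders, hence everywhere. For `A = {y | y 0 = 1}`, the orbit point
`σ^m x` lies in `⋂ n ∈ α, σ⁻ⁿ A` exactly when `m ∈ ⋂ n ∈ α, (E - n)`, so `μ` of that cylinder is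
a limit of window densities of this set, which is at most its upper Banach density; for `α = {0}`
the windows were chosen to give exactly `BD*(E)`.
-/

open Filter Set Topology

noncomputable def windowDensity (S : Set ℤ) (M : ℤ) (N : ℕ) : ℝ :=
  ((S ∩ Ico M (M + (N : ℤ))).ncard : ℝ) / N

section WindowDensity

variable (S : Set ℤ)

theorem upperBanachDensity_eq_limsup_iSup_windowDensity :
    upperBanachDensity S = limsup (fun N : ℕ => ⨆ M, windowDensity S M N) atTop :=
  rfl

theorem ncard_inter_Ico_le (M : ℤ) (N : ℕ) : (S ∩ Ico M (M + (N : ℤ))).ncard ≤ N := by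
  calc (S ∩ Ico M (M + (N : ℤ))).ncard ≤ (Ico M (M + (N : ℤ))).ncard :=
        ncard_le_ncard inter_subset_right (finite_Ico _ _)
    _ = N := by rw [← Finset.coe_Ico, ncard_coe_finset, Int.card_Ico]; simp

theorem windowDensity_nonneg (M : ℤ) (N : ℕ) : 0 ≤ windowDensity S M N := by
  unfold windowDensity; positivity

theorem windowDensity_le_one (M : ℤ) (N : ℕ) : windowDensity S M N ≤ 1 := by
  rcases N.eq_zero_or_pos with rfl | hN
  · simp [windowDensity]
  · rw [windowDensity, div_le_one (by exact_mod_cast hN)]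
    exact_mod_cast ncard_inter_Ico_le S M N

theorem windowDensity_le_iSup (M : ℤ) (N : ℕ) :
    windowDensity S M N ≤ ⨆ M', windowDensity S M' N :=
  le_ciSup ⟨1, forall_mem_range.2 fun M' => windowDensity_le_one S M' N⟩ M

theorem isBoundedUnder_le_iSup_windowDensity (L : Filter ℕ) :
    IsBoundedUnder (· ≤ ·) L fun N => ⨆ M, windowDensity S M N :=
  isBoundedUnder_of ⟨1, fun N => ciSup_le fun M => windowDensity_le_one S M N⟩

theorem isCoboundedUnder_le_iSup_windowDensity :
    IsCoboundedUnder (· ≤ ·) atTop fun N => ⨆ M, windowDensity S M N :=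
  IsBoundedUnder.isCoboundedUnder_le <| isBoundedUnder_of
    ⟨0, fun N => (windowDensity_nonneg S 0 N).trans (windowDensity_le_iSup S 0 N)⟩

theorem exists_tendsto_windowDensity_upperBanachDensity :
    ∃ (M : ℕ → ℤ) (N : ℕ → ℕ), (∀ k, 0 < N k) ∧ Tendsto N atTop atTop ∧
      Tendsto (fun k => windowDensity S (M k) (N k)) atTop (𝓝 (upperBanachDensity S)) := by
  have hD := upperBanachDensity_eq_limsup_iSup_windowDensity S
  have hgood (k : ℕ) :
      ∃ N M, k + 1 ≤ N ∧ |windowDensity S M N - upperBanachDensity S| ≤ 2 / (k + 1) := by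
    have hε : (0 : ℝ) < 1 / (k + 1) := by positivity
    have hlow : ∃ᶠ N in atTop, upperBanachDensity S - 1 / (k + 1) < ⨆ M, windowDensity S M N :=
      frequently_lt_of_lt_limsup (isCoboundedUnder_le_iSup_windowDensity S)
        (by rw [← hD]; linarith)
    have hhigh : ∀ᶠ N in atTop, ⨆ M, windowDensity S M N < upperBanachDensity S + 1 / (k + 1) :=
      eventually_lt_of_limsup_lt (by rw [← hD]; linarith)
        (isBoundedUnder_le_iSup_windowDensity S atTop)
    obtain ⟨N, ⟨hNk, hNhigh⟩, hNlow⟩ :=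
      ((eventually_ge_atTop (k + 1)).and hhigh).and_frequently hlow |>.exists
    obtain ⟨M, hM⟩ : ∃ M, (⨆ M, windowDensity S M N) - 1 / (k + 1) < windowDensity S M N :=
      exists_lt_of_lt_ciSup (sub_lt_self _ hε)
    have htwo : (2 : ℝ) / (k + 1) = 1 / (k + 1) + 1 / (k + 1) := by ring
    refine ⟨N, M, hNk, abs_le.mpr ⟨?_, ?_⟩⟩
    · linarith
    · linarith [windowDensity_le_iSup S M N]
  choose N M hNk hND using hgood
  refine ⟨M, N, fun k => (hNk k).trans_lt' k.succ_pos, ?_, ?_⟩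
  · exact tendsto_atTop_mono hNk (tendsto_add_atTop_nat 1)
  · rw [tendsto_iff_dist_tendsto_zero]
    refine squeeze_zero (fun _ => dist_nonneg) (fun k => (Real.dist_eq _ _).trans_le (hND k)) ?_
    simpa [div_eq_mul_inv] using (tendsto_one_div_add_atTop_nhds_zero_nat (𝕜 := ℝ)).const_mul 2

theorem windowDensity_preimage_add_one (M : ℤ) (N : ℕ) :
    windowDensity ((· + 1) ⁻¹' S) M N = windowDensity S (M + 1) N := by
  unfold windowDensity
  rw [← ncard_image_of_injective _ (add_left_injective 1), image_preimage_inter,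
    image_add_const_Ico, add_right_comm]

theorem abs_windowDensity_add_one_sub_le (M : ℤ) (N : ℕ) :
    |windowDensity S (M + 1) N - windowDensity S M N| ≤ 1 / N := by
  have hfin (a b : ℤ) : (S ∩ Ico a b).Finite := (finite_Ico a b).subset inter_subset_right
  have hright : (S ∩ Ico (M + 1) (M + 1 + N)).ncard ≤ (S ∩ Ico M (M + N)).ncard + 1 := by
    refine (ncard_le_ncard ?_ ((hfin _ _).insert (M + N))).trans (ncard_insert_le _ _)
    rintro m ⟨hm, h1, h2⟩
    rcases eq_or_lt_of_le (show m ≤ M + N by omega) with rfl | hlt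
    · exact mem_insert _ _
    · exact mem_insert_of_mem _ ⟨hm, by omega, hlt⟩
  have hleft : (S ∩ Ico M (M + N)).ncard ≤ (S ∩ Ico (M + 1) (M + 1 + N)).ncard + 1 := by
    refine (ncard_le_ncard ?_ ((hfin _ _).insert M)).trans (ncard_insert_le _ _)
    rintro m ⟨hm, h1, h2⟩
    rcases eq_or_lt_of_le h1 with rfl | hlt
    · exact mem_insert _ _
    · exact mem_insert_of_mem _ ⟨hm, hlt, by omega⟩
  rcases N.eq_zero_or_pos with rfl | hN
  · simp [windowDensity]
  have hN' : (0 : ℝ) < N := by exact_mod_cast hN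
  have hright' := (Nat.cast_le (α := ℝ)).2 hright
  have hleft' := (Nat.cast_le (α := ℝ)).2 hleft
  push_cast at hright' hleft'
  rw [windowDensity, windowDensity, ← sub_div, abs_div, abs_of_pos hN',
    div_le_div_iff_of_pos_right hN', abs_le]
  constructor <;> linarith

end WindowDensity

theorem le_upperBanachDensity_of_tendsto_windowDensity {ι : Type*} {L : Filter ι} [L.NeBot]
    {S : Set ℤ} {M : ι → ℤ} {N : ι → ℕ} {c : ℝ} (hN : Tendsto N L atTop)
    (hc : Tendsto (fun i => windowDensity S (M i) (N i)) L (𝓝 c)) :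
    c ≤ upperBanachDensity S := by
  refine le_of_forall_pos_le_add fun ε hε => le_of_tendsto hc ?_
  have hsmall : ∀ᶠ n in atTop, ⨆ M, windowDensity S M n < upperBanachDensity S + ε :=
    eventually_lt_of_limsup_lt (lt_add_of_pos_right _ hε)
      (isBoundedUnder_le_iSup_windowDensity S atTop)
  filter_upwards [hN.eventually hsmall] with i hi
  exact (windowDensity_le_iSup S (M i) (N i)).trans hi.le

section OrbitSegment

variable {X : Type*} [MeasurableSpace X]

noncomputable def orbitSegmentMeasure (T : Equiv.Perm X) (x : X) (M : ℤ) {N : ℕ} (hN : 0 < N) :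
    ProbabilityMeasure X :=
  ⟨(PMF.uniformOfFinset (Finset.Ico M (M + N)) (by simpa using hN)).toMeasure.map
      fun m => (T ^ m) x,
    Measure.isProbabilityMeasure_map (measurable_of_countable _).aemeasurable⟩

theorem orbitSegmentMeasure_apply (T : Equiv.Perm X) (x : X) (M : ℤ) {N : ℕ} (hN : 0 < N)
    {s : Set X} (hs : MeasurableSet s) :
    (orbitSegmentMeasure T x M hN s : ℝ) = windowDensity {m | (T ^ m) x ∈ s} M N := by
  classical
  have hcard : {m ∈ Finset.Ico M (M + N) | (T ^ m) x ∈ s}.card =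
      ({m | (T ^ m) x ∈ s} ∩ Ico M (M + N)).ncard := by
    rw [← ncard_coe_finset, Finset.coe_filter]
    congr 1
    ext m
    simp [and_comm]
  rw [ProbabilityMeasure.coeFn_def, ENNReal.coe_toNNReal_eq_toReal, orbitSegmentMeasure,
    ProbabilityMeasure.coe_mk, Measure.map_apply (measurable_of_countable _) hs,
    PMF.toMeasure_uniformOfFinset_apply _ _ (MeasurableSet.of_discrete), ENNReal.toReal_div,
    ENNReal.toReal_natCast, ENNReal.toReal_natCast, Int.card_Ico, add_sub_cancel_left,
    Int.toNat_natCast, windowDensity, ← hcard]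
  rfl

end OrbitSegment

section OrbitSegmentLimit

variable {X : Type*} [MeasurableSpace X] [TopologicalSpace X] [OpensMeasurableSpace X]
  [HasOuterApproxClosed X] {T : Equiv.Perm X} {x : X} {ι : Type*} {L : Filter ι} {M : ι → ℤ}
  {N : ι → ℕ} {hN : ∀ i, 0 < N i} {μ : ProbabilityMeasure X}

theorem tendsto_windowDensity_of_tendsto_orbitSegmentMeasure
    (hμ : Tendsto (fun i => orbitSegmentMeasure T x (M i) (hN i)) L (𝓝 μ))
    {C : Set X} (hC : IsClopen C) :
    Tendsto (fun i => windowDensity {m | (T ^ m) x ∈ C} (M i) (N i)) L (𝓝 (μ C : ℝ)) := by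
  simpa only [orbitSegmentMeasure_apply _ _ _ _ hC.isOpen.measurableSet] using
    NNReal.tendsto_coe.2 (ProbabilityMeasure.tendsto_measure_of_isClopen_of_tendsto hμ hC)

theorem measure_preimage_eq_of_tendsto_orbitSegmentMeasure [L.NeBot] (hT : Continuous T)
    (hNL : Tendsto N L atTop)
    (hμ : Tendsto (fun i => orbitSegmentMeasure T x (M i) (hN i)) L (𝓝 μ))
    {C : Set X} (hC : IsClopen C) :
    (μ : Measure X) (T ⁻¹' C) = (μ : Measure X) C := by
  have hstep : {m : ℤ | (T ^ m) x ∈ T ⁻¹' C} = (· + 1) ⁻¹' {m | (T ^ m) x ∈ C} := by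
    ext m
    simp [add_comm m, zpow_one_add, Equiv.Perm.mul_apply]
  have hdiff : Tendsto (fun i => windowDensity {m | (T ^ m) x ∈ T ⁻¹' C} (M i) (N i) -
      windowDensity {m | (T ^ m) x ∈ C} (M i) (N i)) L (𝓝 0) := by
    simp only [hstep, windowDensity_preimage_add_one]
    exact squeeze_zero_norm (fun i => abs_windowDensity_add_one_sub_le _ _ _)
      (tendsto_one_div_atTop_nhds_zero_nat.comp hNL)
  have hzero : (μ (T ⁻¹' C) : ℝ) - μ C = 0 := tendsto_nhds_unique
    ((tendsto_windowDensity_of_tendsto_orbitSegmentMeasure hμ (hC.preimage hT)).sub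
      (tendsto_windowDensity_of_tendsto_orbitSegmentMeasure hμ hC)) hdiff
  rw [← ProbabilityMeasure.ennreal_coeFn_eq_coeFn_toMeasure,
    ← ProbabilityMeasure.ennreal_coeFn_eq_coeFn_toMeasure, NNReal.eq (sub_eq_zero.1 hzero)]

end OrbitSegmentLimit

section Shift

variable {α : Type*} [TopologicalSpace α]

def shift : (ℤ → α) ≃ₜ (ℤ → α) where
  toFun x i := x (i + 1)
  invFun x i := x (i - 1)
  left_inv x := by ext i; simp
  right_inv x := by ext i; simp
  continuous_toFun := continuous_pi fun i => continuous_apply _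
  continuous_invFun := continuous_pi fun i => continuous_apply _

theorem shift_zpow_apply (n : ℤ) (x : ℤ → α) (i : ℤ) :
    ((shift.toEquiv ^ n) x) i = x (i + n) := by
  induction n using Int.induction_on generalizing x i with
  | zero => simp
  | succ k ih =>
    rw [zpow_add_one, Equiv.Perm.mul_apply, ih]
    simp [shift, add_assoc]
  | pred k ih =>
    rw [zpow_sub_one, Equiv.Perm.mul_apply, ih]
    simp [shift, sub_eq_add_neg, add_assoc]

theorem continuous_shift_zpow (n : ℤ) : Continuous ⇑(shift.toEquiv ^ n : Equiv.Perm (ℤ → α)) := by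
  have : ⇑(shift.toEquiv ^ n : Equiv.Perm (ℤ → α)) = fun x i => x (i + n) :=
    funext fun x => funext (shift_zpow_apply n x)
  rw [this]
  exact continuous_pi fun i => continuous_apply _

end Shift

theorem isClopen_of_mem_measurableCylinders {ι : Type*} {s : Set (ι → Bool)}
    (hs : s ∈ measurableCylinders fun _ : ι => Bool) : IsClopen s := by
  obtain ⟨t, S, -, rfl⟩ := (mem_measurableCylinders s).1 hs
  exact (isClopen_discrete S).preimage (continuous_pi fun i => continuous_apply _)

theorem MeasureTheory.Measure.ext_of_isClopen {ι : Type*} {μ ν : Measure (ι → Bool)}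
    [IsFiniteMeasure μ] (h : ∀ C, IsClopen C → μ C = ν C) : μ = ν :=
  ext_of_generate_finite _ generateFrom_measurableCylinders.symm isPiSystem_measurableCylinders
    (fun s hs => h s (isClopen_of_mem_measurableCylinders hs)) (h univ isClopen_univ)

theorem measurePreserving_shift_of_tendsto_orbitSegmentMeasure {x : ℤ → Bool} {ι : Type*}
    {L : Filter ι} [L.NeBot] {M : ι → ℤ} {N : ι → ℕ} {hN : ∀ i, 0 < N i}
    {μ : ProbabilityMeasure (ℤ → Bool)} (hNL : Tendsto N L atTop)
    (hμ : Tendsto (fun i => orbitSegmentMeasure shift.toEquiv x (M i) (hN i)) L (𝓝 μ)) :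
    MeasurePreserving shift (μ : Measure (ℤ → Bool)) μ :=
  ⟨shift.continuous.measurable, Measure.ext_of_isClopen fun C hC => by
    rw [Measure.map_apply shift.continuous.measurable hC.isOpen.measurableSet]
    exact measure_preimage_eq_of_tendsto_orbitSegmentMeasure shift.continuous hNL hμ hC⟩

theorem exists_shift_invariant_limit_of_orbitSegmentMeasure (x : ℤ → Bool) {M : ℕ → ℤ}
    {N : ℕ → ℕ} (hN : ∀ k, 0 < N k) (hNtop : Tendsto N atTop atTop) :
    ∃ (L : Ultrafilter ℕ) (μ : ProbabilityMeasure (ℤ → Bool)), (L : Filter ℕ) ≤ atTop ∧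
      MeasurePreserving shift (μ : Measure (ℤ → Bool)) μ ∧
      ∀ C, IsClopen C →
        Tendsto (fun k => windowDensity {m | (shift.toEquiv ^ m) x ∈ C} (M k) (N k))
          (L : Filter ℕ) (𝓝 (μ C : ℝ)) := by
  obtain ⟨L, hL⟩ := Ultrafilter.exists_le (atTop : Filter ℕ)
  obtain ⟨μ, -, hμ⟩ := isCompact_univ.ultrafilter_le_nhds
    (L.map fun k => orbitSegmentMeasure shift.toEquiv x (M k) (hN k)) (by simp)
  exact ⟨L, μ, hL, measurePreserving_shift_of_tendsto_orbitSegmentMeasure (hNtop.mono_left hL) hμ,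
    fun C hC => tendsto_windowDensity_of_tendsto_orbitSegmentMeasure hμ hC⟩

theorem setOf_shift_zpow_boolIndicator_mem (E : Set ℤ) :
    {m | (shift.toEquiv ^ m) E.boolIndicator ∈ {y : ℤ → Bool | y 0 = true}} = E := by
  ext m
  simp [shift_zpow_apply, ← mem_iff_boolIndicator]

theorem setOf_shift_zpow_boolIndicator_mem_iInter (E : Set ℤ) (α : Finset ℤ) :
    {m | (shift.toEquiv ^ m) E.boolIndicator ∈
      ⋂ n ∈ α, ⇑(shift.toEquiv ^ n) ⁻¹' {y : ℤ → Bool | y 0 = true}} =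
      ⋂ n ∈ α, {m | m + n ∈ E} := by
  ext m
  simp [shift_zpow_apply, ← mem_iff_boolIndicator, add_comm]

theorem stmt_18_general (E : Set ℤ) :
    ∃ (X : Type) (_ : MeasurableSpace X) (μ : Measure X)
      (_ : IsProbabilityMeasure μ) (T : Equiv.Perm X),
      Measurable (⇑T) ∧ Measurable (⇑T.symm) ∧
      MeasurePreserving (⇑T) μ μ ∧ MeasurePreserving (⇑T.symm) μ μ ∧
      ∃ A : Set X, MeasurableSet A ∧ μ A = ENNReal.ofReal (upperBanachDensity E) ∧
        ∀ α : Finset ℤ, α.Nonempty →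
          (μ (⋂ n ∈ α, (⇑(T ^ n))⁻¹' A)).toReal ≤
            upperBanachDensity (⋂ n ∈ α, { m : ℤ | m + n ∈ E }) := by
  obtain ⟨M, N, hN, hNtop, hE⟩ := exists_tendsto_windowDensity_upperBanachDensity E
  obtain ⟨L, μ, hL, hT, hμ⟩ :=
    exists_shift_invariant_limit_of_orbitSegmentMeasure E.boolIndicator hN hNtop
  have hA : IsClopen {y : ℤ → Bool | y 0 = true} :=
    (isClopen_discrete {true}).preimage (continuous_apply 0)
  have hcyl (α : Finset ℤ) :
      IsClopen (⋂ n ∈ α, ⇑(shift.toEquiv ^ n) ⁻¹' {y : ℤ → Bool | y 0 = true}) :=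
    isClopen_biInter_finset fun n _ => hA.preimage (continuous_shift_zpow n)
  refine ⟨ℤ → Bool, inferInstance, μ, inferInstance, shift.toEquiv, shift.continuous.measurable,
    shift.symm.continuous.measurable, hT, hT.symm shift.toMeasurableEquiv, _,
    hA.isOpen.measurableSet, ?_, fun α _ => ?_⟩
  · have hμA := hμ _ hA
    rw [setOf_shift_zpow_boolIndicator_mem] at hμA
    have hμA' : (μ {y : ℤ → Bool | y 0 = true} : ℝ) = upperBanachDensity E :=
      tendsto_nhds_unique hμA (hE.mono_left hL)
    rw [← ProbabilityMeasure.ennreal_coeFn_eq_coeFn_toMeasure, ← hμA', ENNReal.ofReal_coe_nnreal]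
  · have hμα := hμ _ (hcyl α)
    rw [setOf_shift_zpow_boolIndicator_mem_iInter] at hμα
    rw [← measureReal_def, ProbabilityMeasure.measureReal_eq_coe_coeFn]
    exact le_upperBanachDensity_of_tendsto_windowDensity (hNtop.mono_left hL) hμα

theorem stmt_18 (E : Set ℤ) (hE : 0 < upperBanachDensity E) :
    ∃ (X : Type) (_ : MeasurableSpace X) (μ : Measure X)
      (_ : IsProbabilityMeasure μ) (T : Equiv.Perm X),
      Measurable (⇑T) ∧ Measurable (⇑T.symm) ∧
      MeasurePreserving (⇑T) μ μ ∧ MeasurePreserving (⇑T.symm) μ μ ∧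
      ∃ A : Set X, MeasurableSet A ∧ μ A = ENNReal.ofReal (upperBanachDensity E) ∧
        ∀ α : Finset ℤ, α.Nonempty →
          (μ (⋂ n ∈ α, (⇑(T ^ n))⁻¹' A)).toReal ≤
            upperBanachDensity (⋂ n ∈ α, { m : ℤ | m + n ∈ E }) :=
  stmt_18_general E
end

section
/- Let d ≥ 1 and let S ⊆ ℤ be a set of d-recurrence. Then S is a set of d-topological recurrence; that is, for every nonempty compact metric space X, every homeomorphism T : X → X such that every orbit {Tⁿx : n ∈ ℤ} is dense in X, and every nonempty open set U ⊆ X, there exists n ∈ S such that U ∩ T^{−n}U ∩ T^{−2n}U ∩ ⋯ ∩ T^{−dn}U ≠ ∅. -/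
/-!
An invariant Borel probability measure `μ` exists by Krylov–Bogolyubov: any weak-* cluster point
of the orbit averages `n⁻¹ ∑_{k<n} δ_{Tᵏx}` is `T`-invariant, because the averages of `g ∘ T` and
of `g` differ by `(g (Tⁿx) - g x) / n`. Since every orbit is dense, the translates `T⁻ⁿU` of a
nonempty open set `U` cover `X`, so `μ U > 0`. Measurable recurrence applied to `U` then gives
`n ∈ S` for which `U ∩ T⁻ⁿU ∩ ⋯ ∩ T⁻ᵈⁿU` has positive measure, hence is nonempty.
-/

open MeasureTheory

/-- `S ⊆ ℤ` is a set of `d`-recurrence: for every invertible measure-preserving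
transformation `T` of a probability space and every measurable `A` with `μ A > 0`,
there is `n ∈ S` with `μ(A ∩ T^{−n}A ∩ ⋯ ∩ T^{−dn}A) > 0`. -/
def IsSetOfDRecurrence (d : ℕ) (S : Set ℤ) : Prop :=
  ∀ (X : Type) [MeasurableSpace X] (μ : Measure X) [IsProbabilityMeasure μ]
    (T : Equiv.Perm X), Measurable (⇑T) → Measurable (⇑T.symm) →
    MeasurePreserving (⇑T) μ μ → MeasurePreserving (⇑T.symm) μ μ →
    ∀ A : Set X, MeasurableSet A → 0 < μ A →
      ∃ n ∈ S, 0 < μ (⋂ i ∈ Finset.range (d + 1), (⇑(T ^ ((i : ℤ) * n)))⁻¹' A)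

open Filter Topology
open scoped ENNReal

section OrbitMeasure

variable {X : Type*} [MeasurableSpace X]

noncomputable def orbitMeasure (f : X → X) (x : X) (n : ℕ) : Measure X :=
  (n : ℝ≥0∞)⁻¹ • ∑ k ∈ Finset.range n, Measure.dirac (f^[k] x)

theorem isProbabilityMeasure_orbitMeasure (f : X → X) (x : X) {n : ℕ} (hn : n ≠ 0) :
    IsProbabilityMeasure (orbitMeasure f x n) :=
  ⟨by simp [orbitMeasure, ENNReal.inv_mul_cancel, hn]⟩

theorem integral_orbitMeasure [MeasurableSingletonClass X] (f : X → X) (x : X) (n : ℕ)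
    (g : X → ℝ) : ∫ y, g y ∂orbitMeasure f x n = birkhoffAverage ℝ f g n x := by
  rw [orbitMeasure, integral_smul_measure,
    integral_finsetSum_measure fun k _ ↦ integrable_dirac enorm_lt_top]
  simp [birkhoffAverage, birkhoffSum, integral_dirac]

theorem integral_comp_orbitMeasure [MeasurableSingletonClass X] (f : X → X) (x : X) (n : ℕ)
    (g : X → ℝ) : ∫ y, g (f y) ∂orbitMeasure f x n = birkhoffAverage ℝ f g n (f x) := by
  simp only [integral_orbitMeasure, birkhoffAverage, birkhoffSum,
    ← Function.iterate_succ_apply, ← Function.iterate_succ_apply']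

end OrbitMeasure

theorem MapClusterPt.eq_of_tendsto_comp {α X Y : Type*} [TopologicalSpace X] [TopologicalSpace Y]
    [T2Space Y] {F : Filter α} {u : α → X} {x : X} {Φ : X → Y} {y : Y}
    (hx : MapClusterPt x F u) (hΦ : ContinuousAt Φ x) (hy : Tendsto (Φ ∘ u) F (𝓝 y)) :
    Φ x = y :=
  eq_of_nhds_neBot (ClusterPt.mono (hx.continuousAt_comp hΦ) hy).neBot

theorem exists_isProbabilityMeasure_measurePreserving {X : Type*} [TopologicalSpace X]
    [MeasurableSpace X] [BorelSpace X] [TopologicalSpace.MetrizableSpace X] [CompactSpace X]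
    [Nonempty X] {f : X → X} (hf : Continuous f) :
    ∃ μ : Measure X, IsProbabilityMeasure μ ∧ MeasurePreserving f μ μ := by
  let x : X := Classical.arbitrary X
  let ν (n : ℕ) : ProbabilityMeasure X :=
    ⟨orbitMeasure f x (n + 1), isProbabilityMeasure_orbitMeasure f x n.succ_ne_zero⟩
  obtain ⟨μ, hμ⟩ := exists_clusterPt_of_compactSpace (map ν atTop)
  refine ⟨μ, inferInstance, hf.measurable, ?_⟩
  refine ext_of_forall_integral_eq_of_IsFiniteMeasure fun g ↦ ?_
  rw [integral_map hf.aemeasurable g.continuous.aestronglyMeasurable, ← sub_eq_zero]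
  refine MapClusterPt.eq_of_tendsto_comp (u := ν) hμ
    (Φ := fun ρ : ProbabilityMeasure X ↦ ∫ y, g (f y) ∂ρ - ∫ y, g y ∂ρ) ?_ ?_
  · exact ((ProbabilityMeasure.continuous_integral_boundedContinuousFunction
      (g.compContinuous ⟨f, hf⟩)).sub
      (ProbabilityMeasure.continuous_integral_boundedContinuousFunction g)).continuousAt
  · refine ((tendsto_birkhoffAverage_apply_sub_birkhoffAverage' ℝ g.isBounded_range f x).comp
      (tendsto_add_atTop_nat 1)).congr fun n ↦ ?_
    change _ - _ = ∫ y, g (f y) ∂orbitMeasure f x (n + 1) - ∫ y, g y ∂orbitMeasure f x (n + 1)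
    rw [integral_comp_orbitMeasure, integral_orbitMeasure]

section DenseOrbits

variable {X : Type*} [MeasurableSpace X] {μ : Measure X} {T : Equiv.Perm X}

theorem MeasureTheory.MeasurePreserving.perm_symm (hT : MeasurePreserving T μ μ)
    (hT' : Measurable T.symm) : MeasurePreserving T.symm μ μ :=
  hT.symm ⟨T, hT.measurable, hT'⟩

theorem MeasureTheory.MeasurePreserving.perm_zpow (hT : MeasurePreserving T μ μ)
    (hT' : MeasurePreserving T.symm μ μ) (n : ℤ) : MeasurePreserving ⇑(T ^ n) μ μ := by
  induction n using Int.induction_on with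
  | zero => exact MeasurePreserving.id μ
  | succ n ih => rw [zpow_add_one, Equiv.Perm.coe_mul]; exact ih.comp hT
  | pred n ih => rw [zpow_sub_one, Equiv.Perm.coe_mul]; exact ih.comp hT'

theorem IsOpen.measure_pos_of_forall_dense_orbit [TopologicalSpace X] [OpensMeasurableSpace X]
    [NeZero μ] (hT : ∀ n : ℤ, MeasurePreserving ⇑(T ^ n) μ μ)
    (hdense : ∀ x, Dense (Set.range fun n : ℤ ↦ (T ^ n) x)) {U : Set X} (hU : IsOpen U)
    (hne : U.Nonempty) : 0 < μ U := by
  have hcover : ⋃ n : ℤ, ⇑(T ^ n) ⁻¹' U = Set.univ := Set.eq_univ_of_forall fun x ↦ by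
    obtain ⟨_, ⟨n, rfl⟩, hn⟩ := (hdense x).exists_mem_open hU hne
    exact Set.mem_iUnion.2 ⟨n, hn⟩
  refine pos_iff_ne_zero.2 fun hU0 ↦ NeZero.ne μ ?_
  rw [← Measure.measure_univ_eq_zero, ← hcover]
  exact measure_iUnion_null fun n ↦ by
    rw [(hT n).measure_preimage hU.measurableSet.nullMeasurableSet, hU0]

end DenseOrbits

theorem stmt_19_general (d : ℕ) (S : Set ℤ) (hS : IsSetOfDRecurrence d S) :
    ∀ (X : Type) [MetricSpace X] [CompactSpace X] [Nonempty X]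
      (T : Equiv.Perm X), Continuous (⇑T) → Continuous (⇑T.symm) →
      (∀ x : X, Dense (Set.range fun n : ℤ => (T ^ n) x)) →
      ∀ U : Set X, IsOpen U → U.Nonempty →
        ∃ n ∈ S, (⋂ i ∈ Finset.range (d + 1), (⇑(T ^ ((i : ℤ) * n)))⁻¹' U).Nonempty := by
  intro X _ _ _ T hT hT' hdense U hU hne
  borelize X
  obtain ⟨μ, _, hμT⟩ := exists_isProbabilityMeasure_measurePreserving hT
  have hμT' := hμT.perm_symm hT'.measurable
  have hμU : 0 < μ U := hU.measure_pos_of_forall_dense_orbit (hμT.perm_zpow hμT') hdense hne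
  obtain ⟨n, hnS, hpos⟩ := hS X μ T hT.measurable hT'.measurable hμT hμT' U hU.measurableSet hμU
  exact ⟨n, hnS, nonempty_of_measure_ne_zero hpos.ne'⟩

theorem stmt_19 (d : ℕ) (hd : 1 ≤ d) (S : Set ℤ) (hS : IsSetOfDRecurrence d S) :
    ∀ (X : Type) [MetricSpace X] [CompactSpace X] [Nonempty X]
      (T : Equiv.Perm X), Continuous (⇑T) → Continuous (⇑T.symm) →
      (∀ x : X, Dense (Set.range fun n : ℤ => (T ^ n) x)) →
      ∀ U : Set X, IsOpen U → U.Nonempty →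
        ∃ n ∈ S, (⋂ i ∈ Finset.range (d + 1), (⇑(T ^ ((i : ℤ) * n)))⁻¹' U).Nonempty :=
  stmt_19_general d S hS
end
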